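/- arXiv:2502.11732 — 7 statements merged into one kernel-verified Lean document; each statement's English description precedes it below -/
import Mathlib

section
/- Heisenberg–Kennard–Weyl uncertainty principle. For every nonzero Schwartz function f : ℝ → ℂ normalized so that ‖f‖₂ = 1 (and hence ‖f̂‖₂ = 1), one has (∫_ℝ x² |f(x)|² dx) · (∫_ℝ ξ² |f̂(ξ)|² dξ) ≥ 1/(16π²). -/
/-!
Integrating `x ‖f x‖²` by parts gives `∫ ‖f‖² = -2 ∫ ⟪x f, f'⟫`, and Cauchy–Schwarz in `L²`
bounds the right side by `2 ‖x f‖₂ ‖f'‖₂`. Since `𝓕 f' ξ = 2πiξ 𝓕 f ξ`, Plancherel turns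
`‖f'‖₂²` into `4π² ∫ ξ² ‖𝓕 f ξ‖²`.
-/

open MeasureTheory Real FourierTransform SchwartzMap
open scoped RealInnerProductSpace

namespace SchwartzMap

section L2

variable {E F : Type*} [NormedAddCommGroup E] [NormedSpace ℝ E] [FiniteDimensional ℝ E]
  [MeasurableSpace E] [BorelSpace E] [NormedAddCommGroup F] [InnerProductSpace ℝ F]
  (μ : Measure E) [μ.HasTemperateGrowth]

theorem real_inner_toL2_toL2_eq (f g : 𝓢(E, F)) :
    ⟪f.toLp 2 μ, g.toLp 2 μ⟫ = ∫ x, ⟪f x, g x⟫ ∂μ := by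
  rw [L2.inner_def]
  refine integral_congr_ae ?_
  filter_upwards [f.coeFn_toLp 2 μ, g.coeFn_toLp 2 μ] with x hf hg
  rw [hf, hg]

theorem norm_toL2_sq (f : 𝓢(E, F)) : ‖f.toLp 2 μ‖ ^ 2 = ∫ x, ‖f x‖ ^ 2 ∂μ := by
  simp only [← real_inner_self_eq_norm_sq, real_inner_toL2_toL2_eq]

end L2

variable {F : Type*} [NormedAddCommGroup F] [InnerProductSpace ℝ F]

theorem integral_norm_sq_eq_neg_two_mul_integral_inner_smul_deriv (f : 𝓢(ℝ, F)) :
    ∫ x, ‖f x‖ ^ 2 = -2 * ∫ x, ⟪x • f x, deriv f x⟫ := by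
  set g := smulLeftCLM F (fun x : ℝ ↦ x) f
  have hg : ∀ x, g x = x • f x := smulLeftCLM_apply_apply (Function.HasTemperateGrowth.id') f
  have hg' : ∀ x, ⟪deriv g x, f x⟫ = ‖f x‖ ^ 2 + ⟪x • f x, deriv f x⟫ := by
    intro x
    have hderiv_g : deriv g x = x • deriv f x + (1 : ℝ) • f x := by
      rw [show ⇑g = fun x ↦ x • f x from funext hg]
      exact ((hasDerivAt_id' x).smul (f.hasDerivAt x)).deriv
    rw [hderiv_g, inner_add_left, one_smul, real_inner_self_eq_norm_sq, real_inner_smul_left,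
      real_inner_smul_left, real_inner_comm]
    ring
  have hibp := integral_bilinear_deriv_right_eq_neg_left g f (innerSL ℝ)
  simp only [innerSL_apply_apply ℝ, hg, hg'] at hibp
  have hf_sq : Integrable fun x ↦ ‖f x‖ ^ 2 := (f.memLp 2).integrable_norm_pow two_ne_zero
  have hgf : Integrable fun x : ℝ ↦ ⟪x • f x, deriv f x⟫ := by
    simpa only [pairing_apply, innerSL_apply_apply ℝ, hg, derivCLM_apply] using
      (pairing (innerSL ℝ) g (derivCLM ℝ F f)).integrable (μ := volume)
  rw [integral_add hf_sq hgf] at hibp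
  linarith

theorem sq_integral_norm_sq_le_four_mul (f : 𝓢(ℝ, F)) :
    (∫ x, ‖f x‖ ^ 2) ^ 2 ≤ 4 * (∫ x, x ^ 2 * ‖f x‖ ^ 2) * ∫ x, ‖deriv f x‖ ^ 2 := by
  set u := (smulLeftCLM F (fun x : ℝ ↦ x) f).toLp 2
  set v := (derivCLM ℝ F f).toLp 2
  have hu : ∫ x, x ^ 2 * ‖f x‖ ^ 2 = ‖u‖ ^ 2 := by
    simp [u, norm_toL2_sq, Function.HasTemperateGrowth.id', norm_smul, mul_pow]
  have hv : ∫ x, ‖deriv f x‖ ^ 2 = ‖v‖ ^ 2 := by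
    simp [v, norm_toL2_sq]
  have huv : ∫ x, ‖f x‖ ^ 2 = -2 * ⟪u, v⟫ := by
    simp [u, v, real_inner_toL2_toL2_eq, Function.HasTemperateGrowth.id',
      integral_norm_sq_eq_neg_two_mul_integral_inner_smul_deriv f]
  have hcs : ⟪u, v⟫ ^ 2 ≤ (‖u‖ * ‖v‖) ^ 2 :=
    sq_le_sq' (neg_le_of_abs_le (abs_real_inner_le_norm u v)) (real_inner_le_norm u v)
  rw [hu, hv, huv]
  nlinarith

theorem integral_norm_sq_deriv_eq_four_pi_sq_mul {H : Type*} [NormedAddCommGroup H] [InnerProductSpace ℂ H]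
    [CompleteSpace H] (f : 𝓢(ℝ, H)) :
    ∫ x, ‖deriv f x‖ ^ 2 = 4 * π ^ 2 * ∫ ξ, ξ ^ 2 * ‖𝓕 (⇑f) ξ‖ ^ 2 := by
  have hderiv : 𝓕 (deriv f) = fun ξ : ℝ ↦ (2 * π * Complex.I * ξ) • 𝓕 (⇑f) ξ :=
    Real.fourier_deriv f.integrable f.differentiable (derivCLM ℝ H f).integrable
  have hplancherel := integral_norm_sq_fourier (derivCLM ℝ H f)
  rw [fourier_coe, show ⇑(derivCLM ℝ H f) = deriv f from funext (derivCLM_apply ℝ f)]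
    at hplancherel
  rw [← hplancherel, hderiv, ← integral_const_mul]
  congr 1 with ξ
  simp only [norm_smul, norm_mul, Complex.norm_ofNat, Complex.norm_real, Complex.norm_I,
    Real.norm_eq_abs, abs_of_pos pi_pos, mul_one, mul_pow, sq_abs]
  ring

end SchwartzMap

theorem heisenberg_uncertainty_general (f : SchwartzMap ℝ ℂ)
    (hf2 : eLpNorm (⇑f) 2 volume = 1) :
    (∫ x : ℝ, x ^ 2 * ‖f x‖ ^ 2) *
      (∫ ξ : ℝ, ξ ^ 2 * ‖FourierTransform.fourier (⇑f) ξ‖ ^ 2) ≥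
      1 / (16 * Real.pi ^ 2) := by
  have hnorm : ∫ x, ‖f x‖ ^ 2 = 1 := by
    rw [← norm_toL2_sq, norm_toLp, hf2, ENNReal.toReal_one, one_pow]
  have key := sq_integral_norm_sq_le_four_mul f
  rw [hnorm, integral_norm_sq_deriv_eq_four_pi_sq_mul] at key
  rw [ge_iff_le, div_le_iff₀ (by positivity)]
  linarith

/-- **Heisenberg–Kennard–Weyl uncertainty principle.** For every nonzero
Schwartz function `f : ℝ → ℂ` with `‖f‖₂ = 1` (hence `‖f̂‖₂ = 1`), one has
`(∫ x² |f(x)|² dx) (∫ ξ² |f̂(ξ)|² dξ) ≥ 1/(16π²)`. -/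
theorem heisenberg_uncertainty (f : SchwartzMap ℝ ℂ) (hf : f ≠ 0)
    (hf2 : eLpNorm (⇑f) 2 volume = 1) :
    (∫ x : ℝ, x ^ 2 * ‖f x‖ ^ 2) *
      (∫ ξ : ℝ, ξ ^ 2 * ‖FourierTransform.fourier (⇑f) ξ‖ ^ 2) ≥
      1 / (16 * Real.pi ^ 2) :=
  heisenberg_uncertainty_general f hf2
end

section
/- Donoho–Stark uncertainty principle (Theorem 3.4 of the paper). Let n ≥ 1 and let f : ℤ/nℤ → ℂ be a nonzero function. Then |supp(f)| · |supp(f̂)| ≥ n. -/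
open scoped Real

/-- The discrete Fourier transform on `ℤ/nℤ`:
`f̂(k) = n^{-1/2} ∑_j f(j) e^{2πijk/n}`. -/
noncomputable def dft (n : ℕ) [NeZero n] (f : ZMod n → ℂ) : ZMod n → ℂ := fun k =>
  (n : ℂ) ^ (-(1 / 2 : ℂ)) *
    ∑ j : ZMod n, f j *
      Complex.exp (2 * Real.pi * Complex.I * (j.val : ℂ) * (k.val : ℂ) / (n : ℂ))

/-!
With `‖·‖` the sup norm, `‖𝓕 f‖ ≤ |supp f| ‖f‖` (each coefficient of `𝓕 f` is a sum of
`|supp f|` unimodular multiples of values of `f`) and, by Fourier inversion,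
`‖f‖ ≤ n⁻¹ |supp 𝓕 f| ‖𝓕 f‖`. Chaining the two gives `‖f‖ ≤ n⁻¹ |supp f| |supp 𝓕 f| ‖f‖`,
and `‖f‖ > 0`. The normalisation and sign convention of `dft` differ from Mathlib's `ZMod.dft`
only by a nonzero factor and `k ↦ -k`, which do not change the size of the support.
-/

open ZMod (stdAddChar stdAddChar_apply stdAddChar_coe dft_apply invDFT_apply)
open scoped ZMod

section UncertaintyPrinciple

variable {E : Type*} [NormedAddCommGroup E] [NormedSpace ℂ E]

theorem norm_sum_smul_le_ncard_support_mul {ι : Type*} [Fintype ι] {c : ι → ℂ}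
    (hc : ∀ i, ‖c i‖ ≤ 1) (g : ι → E) :
    ‖∑ i, c i • g i‖ ≤ {i | g i ≠ 0}.ncard * ‖g‖ := by
  classical
  have hsupp : ∑ i with g i ≠ 0, c i • g i = ∑ i, c i • g i :=
    Finset.sum_filter_of_ne fun i _ hi hgi => hi (by rw [hgi, smul_zero])
  rw [← hsupp, Set.ncard_eq_toFinset_card', Set.toFinset_ofPred]
  calc ‖∑ i with g i ≠ 0, c i • g i‖ ≤ ∑ i with g i ≠ 0, ‖c i • g i‖ := norm_sum_le _ _
    _ ≤ ∑ i with g i ≠ 0, ‖g‖ := Finset.sum_le_sum fun i _ =>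
      (norm_smul_le _ _).trans <|
        (mul_le_of_le_one_left (norm_nonneg _) (hc i)).trans (norm_le_pi_norm g i)
    _ = _ := by rw [Finset.sum_const, nsmul_eq_mul]

variable {N : ℕ} [NeZero N]

theorem norm_stdAddChar_le_one (x : ZMod N) : ‖(stdAddChar x : ℂ)‖ ≤ 1 := by
  rw [stdAddChar_apply, Circle.norm_coe]

theorem norm_dft_le_ncard_support_mul (f : ZMod N → E) :
    ‖𝓕 f‖ ≤ {j | f j ≠ 0}.ncard * ‖f‖ := by
  refine (pi_norm_le_iff_of_nonneg (by positivity)).2 fun k => ?_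
  rw [dft_apply]
  exact norm_sum_smul_le_ncard_support_mul (fun _ => norm_stdAddChar_le_one _) f

theorem norm_le_ncard_support_dft_mul (f : ZMod N → E) :
    ‖f‖ ≤ (N : ℝ)⁻¹ * ({k | 𝓕 f k ≠ 0}.ncard * ‖𝓕 f‖) := by
  refine (pi_norm_le_iff_of_nonneg (by positivity)).2 fun j => ?_
  rw [← ZMod.dft.symm_apply_apply f, invDFT_apply, norm_smul, norm_inv, Complex.norm_natCast,
    ZMod.dft.symm_apply_apply]
  gcongr
  exact norm_sum_smul_le_ncard_support_mul (fun _ => norm_stdAddChar_le_one _) (𝓕 f)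

theorem le_ncard_support_mul_ncard_support_dft {f : ZMod N → E} (hf : f ≠ 0) :
    N ≤ {j | f j ≠ 0}.ncard * {k | 𝓕 f k ≠ 0}.ncard := by
  have hN : (0 : ℝ) < N := by exact_mod_cast Nat.pos_of_ne_zero (NeZero.ne N)
  have hf_pos : 0 < ‖f‖ := norm_pos_iff.2 hf
  have key : ‖f‖ ≤ (N : ℝ)⁻¹ * ({k | 𝓕 f k ≠ 0}.ncard * ({j | f j ≠ 0}.ncard * ‖f‖)) :=
    (norm_le_ncard_support_dft_mul f).trans <| by
      gcongr
      exact norm_dft_le_ncard_support_mul f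
  rw [le_inv_mul_iff₀ hN, mul_left_comm, ← mul_assoc] at key
  exact_mod_cast le_of_mul_le_mul_right key hf_pos

end UncertaintyPrinciple

theorem cexp_two_pi_I_val_mul_val_div (n : ℕ) [NeZero n] (j k : ZMod n) :
    Complex.exp (2 * π * Complex.I * (j.val : ℂ) * (k.val : ℂ) / (n : ℂ)) =
      stdAddChar (j * k) := by
  have hjk : j * k = (((j.val * k.val : ℕ) : ℤ) : ZMod n) := by simp
  rw [hjk, stdAddChar_coe]
  push_cast
  ring_nf

theorem dft_eq_cpow_mul_dft_neg (n : ℕ) [NeZero n] (f : ZMod n → ℂ) (k : ZMod n) :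
    dft n f k = (n : ℂ) ^ (-(1 / 2 : ℂ)) * 𝓕 f (-k) := by
  simp only [dft, dft_apply, cexp_two_pi_I_val_mul_val_div, smul_eq_mul, mul_neg, neg_neg,
    mul_comm (f _)]

theorem ncard_support_dft (n : ℕ) [NeZero n] (f : ZMod n → ℂ) :
    {k | dft n f k ≠ 0}.ncard = {k | 𝓕 f k ≠ 0}.ncard := by
  have hsupp : {k | dft n f k ≠ 0} = Neg.neg ⁻¹' {k | 𝓕 f k ≠ 0} := by
    ext k
    simp [dft_eq_cpow_mul_dft_neg, NeZero.ne n]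
  rw [hsupp, Set.ncard_preimage_of_injective_subset_range neg_injective (by simp)]

theorem donoho_stark_general (n : ℕ) [NeZero n] (f : ZMod n → ℂ) (hf : f ≠ 0) :
    n ≤ Set.ncard {x : ZMod n | f x ≠ 0} * Set.ncard {k : ZMod n | dft n f k ≠ 0} := by
  rw [ncard_support_dft]
  exact le_ncard_support_mul_ncard_support_dft hf

/-- **Donoho–Stark uncertainty principle.** For every nonzero function
`f : ℤ/nℤ → ℂ`, `|supp f| · |supp f̂| ≥ n`. -/
theorem donoho_stark (n : ℕ) [NeZero n] (hn : 1 ≤ n) (f : ZMod n → ℂ) (hf : f ≠ 0) :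
    n ≤ Set.ncard {x : ZMod n | f x ≠ 0} * Set.ncard {k : ZMod n | dft n f k ≠ 0} :=
  donoho_stark_general n f hf
end

section
/- Tao's uncertainty principle for cyclic groups of prime order. Let p be a prime and let f : ℤ/pℤ → ℂ be a nonzero function. Then |supp(f)| + |supp(f̂)| ≥ p + 1. -/
/-!
Chebotarev's theorem: for a primitive `p`-th root of unity `ζ` and distinct residues `aᵢ`, `bⱼ`
mod `p`, the minor `det (ζ ^ (aᵢ bⱼ))` is nonzero. It is the value at `X = ζ - 1` of
`P = det ((1 + X) ^ (aᵢ bⱼ)) ∈ ℤ[X]`. Expanding `(1 + X) ^ m = ∑ₛ mˢ log (1 + X) ^ s / s!` row by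
row writes `P` as a sum over `σ : Fin n → ℕ` of terms divisible by `X ^ ∑ σ` that vanish unless `σ`
is injective. Hence `X ^ D ∣ P` for `D = ∑_{i<n} i`, and only the `σ` with values below `n` reach
`X ^ D`, so the coefficient of `X ^ D` is `V(a) V(b) / ∏_{i<n} i!` (`V` the Vandermonde
determinant). If `P (ζ - 1) = 0`, then `P / X ^ D` vanishes at `ζ - 1`, so after `X ↦ X - 1` it is
divisible by the `p`-th cyclotomic polynomial; evaluating at `1` gives `p ∣ V(a) V(b)`, which is
impossible for distinct residues.

With all minors of the Fourier matrix nonzero, if `|supp f| + |supp f̂| ≤ p`, pick `|supp f|`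
frequencies outside `supp f̂`: the corresponding square minor annihilates `f` on its support.
-/

open scoped Real

open Polynomial Finset Matrix Function
open scoped Nat

noncomputable def choosePoly (t : ℕ) : ℚ[X] := C (t ! : ℚ)⁻¹ * descPochhammer ℚ t

lemma choosePoly_eval_natCast (t m : ℕ) : (choosePoly t).eval (m : ℚ) = m.choose t := by
  rw [choosePoly, eval_mul, eval_C, descPochhammer_eval_eq_descFactorial,
    Nat.descFactorial_eq_factorial_mul_choose]
  push_cast
  field_simp

lemma natDegree_choosePoly_le (t : ℕ) : (choosePoly t).natDegree ≤ t :=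
  natDegree_C_mul_le _ _ |>.trans (descPochhammer_natDegree ℚ t).le

lemma coeff_choosePoly_self (t : ℕ) : (choosePoly t).coeff t = (t ! : ℚ)⁻¹ := by
  have h := (monic_descPochhammer ℚ t).coeff_natDegree
  rw [descPochhammer_natDegree] at h
  rw [choosePoly, coeff_C_mul, h, mul_one]

/-- The truncation below degree `N` of `log (1 + X) ^ s / s!`, the coefficient of `mˢ` in
`(1 + X) ^ m = exp (m log (1 + X))`. -/
noncomputable def truncLogPow (N s : ℕ) : ℚ[X] :=
  ∑ t ∈ range N, C ((choosePoly t).coeff s) * X ^ t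

lemma coeff_truncLogPow (N s t : ℕ) :
    (truncLogPow N s).coeff t = if t < N then (choosePoly t).coeff s else 0 := by
  simp [truncLogPow]

lemma X_pow_dvd_truncLogPow (N s : ℕ) : X ^ s ∣ truncLogPow N s := by
  refine X_pow_dvd_iff.mpr fun t ht => ?_
  rw [coeff_truncLogPow, coeff_eq_zero_of_natDegree_lt ((natDegree_choosePoly_le t).trans_lt ht),
    ite_self]

lemma coeff_truncLogPow_self {N s : ℕ} (hs : s < N) :
    (truncLogPow N s).coeff s = (s ! : ℚ)⁻¹ := by
  rw [coeff_truncLogPow, if_pos hs, coeff_choosePoly_self]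

lemma sum_natCast_pow_mul_truncLogPow {N m : ℕ} (hm : m < N) :
    ∑ s ∈ range N, (m : ℚ[X]) ^ s * truncLogPow N s = (X + 1) ^ m := by
  ext t
  simp_rw [finsetSum_coeff, ← C_eq_natCast, ← C_pow, coeff_C_mul, coeff_truncLogPow,
    coeff_X_add_one_pow]
  split_ifs with ht
  · rw [← choosePoly_eval_natCast, eval_eq_sum_range' ((natDegree_choosePoly_le t).trans_lt ht)]
    simp_rw [mul_comm]
  · simp [Nat.choose_eq_zero_of_lt (hm.trans_le (not_lt.mp ht))]

lemma Matrix.det_of_sum_mul {ι κ R : Type*} [Fintype ι] [DecidableEq ι] [CommRing R]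
    (S : Finset κ) (u : ι → κ → R) (w : κ → ι → R) :
    (of fun i j => ∑ s ∈ S, u i s * w s j).det =
      ∑ σ ∈ Fintype.piFinset fun _ => S, (∏ i, u i (σ i)) * (of fun i j => w (σ i) j).det := by
  have h := (detRowAlternating : (ι → R) [⋀^ι]→ₗ[R] R).toMultilinearMap.map_sum_finset
    (fun i s => u i s • w s) fun _ => S
  calc (of fun i j => ∑ s ∈ S, u i s * w s j).det
      = (of fun i => ∑ s ∈ S, u i s • w s).det := by congr; ext i j; simp [Finset.sum_apply]
    _ = ∑ σ ∈ Fintype.piFinset fun _ => S, (of fun i => u i (σ i) • w (σ i)).det := h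
    _ = _ := sum_congr rfl fun σ _ =>
      det_mul_column (fun i => u i (σ i)) (of fun i j => w (σ i) j)

lemma Polynomial.coeff_prod_of_X_pow_dvd {ι R : Type*} [Fintype ι] [CommSemiring R]
    (f : ι → R[X]) (k : ι → ℕ) (h : ∀ i, X ^ k i ∣ f i) :
    (∏ i, f i).coeff (∑ i, k i) = ∏ i, (f i).coeff (k i) := by
  choose g hg using h
  simp_rw [hg, prod_mul_distrib, prod_pow_eq_pow_sum, coeff_X_pow_mul', le_refl, if_true,
    Nat.sub_self, coeff_zero_prod]

lemma Finset.sum_range_card_add_card_sdiff_le (S : Finset ℕ) :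
    ∑ i ∈ range #S, i + #(S \ range #S) ≤ ∑ x ∈ S, x := by
  set R := range #S
  have hcard : #(S \ R) = #(R \ S) := card_sdiff_comm (card_range _).symm
  have hSR : #(S \ R) * #S ≤ ∑ x ∈ S \ R, x :=
    card_nsmul_le_sum _ _ _ fun x hx => by simpa [R] using (mem_sdiff.mp hx).2
  have hRS : ∑ x ∈ R \ S, (x + 1) ≤ #(R \ S) * #S :=
    sum_le_card_nsmul _ _ _ fun x hx => by simpa [R] using (mem_sdiff.mp hx).1
  rw [sum_add_distrib, sum_const, smul_eq_mul, mul_one] at hRS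
  have hS := sum_inter_add_sum_sdiff S R id
  have hR := sum_inter_add_sum_sdiff R S id
  rw [inter_comm] at hR
  simp only [id] at hS hR
  nlinarith

lemma Function.Injective.sum_fin_val_add_card_le {n : ℕ} {σ : Fin n → ℕ} (hσ : Injective σ) :
    ∑ i : Fin n, (i : ℕ) + #{i | n ≤ σ i} ≤ ∑ i, σ i := by
  have h := sum_range_card_add_card_sdiff_le (univ.image σ)
  rw [card_image_of_injective _ hσ, card_univ, Fintype.card_fin, sum_image hσ.injOn,
    ← Fin.sum_univ_eq_sum_range] at h
  have hc : #{i | n ≤ σ i} ≤ #(univ.image σ \ range n) :=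
    card_le_card_of_injOn σ (fun i hi => by simp_all) hσ.injOn
  omega

section LowestCoeff

variable {R : Type*} [CommRing R] {n : ℕ} (u : Fin n → ℕ → R[X]) (w : ℕ → Fin n → R[X])

lemma coeff_prod_mul_det_eq_zero (hu : ∀ i s, X ^ s ∣ u i s) {σ : Fin n → ℕ} {k : ℕ}
    (hk : Injective σ → k < ∑ i, σ i) :
    ((∏ i, u i (σ i)) * (of fun i j => w (σ i) j).det).coeff k = 0 := by
  by_cases hσ : Injective σ
  · have hdvd : X ^ ∑ i, σ i ∣ ∏ i, u i (σ i) :=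
      prod_pow_eq_pow_sum univ σ (X : R[X]) ▸ prod_dvd_prod_of_dvd _ _ fun i _ => hu i (σ i)
    exact X_pow_dvd_iff.mp (hdvd.mul_right _) k (hk hσ)
  · obtain ⟨i, j, hij, hne⟩ := not_injective_iff.mp hσ
    rw [det_zero_of_row_eq hne (by ext; simp [hij]), mul_zero, coeff_zero]

variable {u}

lemma coeff_det_of_sum_mul_eq_zero (hu : ∀ i s, X ^ s ∣ u i s) (S : Finset ℕ) {k : ℕ}
    (hk : k < ∑ i : Fin n, (i : ℕ)) : (of fun i j => ∑ s ∈ S, u i s * w s j).det.coeff k = 0 := by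
  rw [det_of_sum_mul, finsetSum_coeff]
  exact sum_eq_zero fun σ _ => coeff_prod_mul_det_eq_zero u w hu fun hσ =>
    hk.trans_le (le_of_add_le_left hσ.sum_fin_val_add_card_le)

lemma coeff_det_of_sum_mul_eq_of_range_subset (hu : ∀ i s, X ^ s ∣ u i s) {S : Finset ℕ}
    (hS : range n ⊆ S) :
    (of fun i j => ∑ s ∈ S, u i s * w s j).det.coeff (∑ i : Fin n, (i : ℕ)) =
      (of fun i j => ∑ s ∈ range n, u i s * w s j).det.coeff (∑ i : Fin n, (i : ℕ)) := by
  simp_rw [det_of_sum_mul, finsetSum_coeff]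
  refine (sum_subset (Fintype.piFinset_subset _ _ fun _ => hS) fun σ _ hσ =>
    coeff_prod_mul_det_eq_zero u w hu fun hinj => ?_).symm
  obtain ⟨i, hi⟩ : ∃ i, n ≤ σ i := by simpa [Fintype.mem_piFinset] using hσ
  have hpos : 0 < #{i | n ≤ σ i} := card_pos.mpr ⟨i, by simp [hi]⟩
  have := hinj.sum_fin_val_add_card_le
  omega

end LowestCoeff

lemma Matrix.det_of_sum_range_pow_mul {R : Type*} [CommRing R] {n : ℕ} (x y : Fin n → R)
    (q : ℕ → R) :
    (of fun i j => ∑ s ∈ range n, x i ^ s * q s * y j ^ s).det =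
      (vandermonde x).det * (∏ s : Fin n, q s) * (vandermonde y).det := by
  have h : (of fun i j => ∑ s ∈ range n, x i ^ s * q s * y j ^ s) =
      vandermonde x * diagonal (fun s : Fin n => q s) * (vandermonde y)ᵀ := by
    ext i j
    simp [mul_apply, vandermonde_apply, diagonal_apply,
      ← Fin.sum_univ_eq_sum_range fun s => x i ^ s * q s * y j ^ s]
  rw [h, det_mul, det_mul, det_diagonal, det_transpose]

lemma RingHom.map_det_vandermonde {R S : Type*} [CommRing R] [CommRing S] (f : R →+* S) {n : ℕ}
    (v : Fin n → R) : f (vandermonde v).det = (vandermonde (f ∘ v)).det := by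
  rw [f.map_det]
  congr 1
  ext i j
  simp [vandermonde_apply]

section DetOneAddXPow

variable {n : ℕ} (a b : Fin n → ℕ)

noncomputable def detOneAddXPow (R : Type*) [CommRing R] : R[X] :=
  (of fun i j => (X + 1 : R[X]) ^ (a i * b j)).det

lemma map_detOneAddXPow {R S : Type*} [CommRing R] [CommRing S] (f : R →+* S) :
    (detOneAddXPow a b R).map f = detOneAddXPow a b S := by
  rw [detOneAddXPow, ← coe_mapRingHom, RingHom.map_det]
  congr 1
  ext i j
  simp

lemma aeval_sub_one_detOneAddXPow {R A : Type*} [CommRing R] [CommRing A] [Algebra R A] (x : A) :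
    aeval (x - 1) (detOneAddXPow a b R) = (of fun i j => x ^ (a i * b j)).det := by
  rw [detOneAddXPow, AlgHom.map_det]
  congr 1
  ext i j
  simp

lemma exists_detOneAddXPow_rat_eq_det_sum : ∃ N, n ≤ N ∧ detOneAddXPow a b ℚ =
    (of fun i j => ∑ s ∈ range N, (a i : ℚ[X]) ^ s * truncLogPow N s * (b j : ℚ[X]) ^ s).det := by
  set N := n + ∑ i, ∑ j, (a i * b j + 1)
  have hN (i j) : a i * b j < N :=
    calc a i * b j < ∑ j', (a i * b j' + 1) :=
          single_le_sum (f := fun j' => a i * b j' + 1) (fun _ _ => Nat.zero_le _) (mem_univ j)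
      _ ≤ ∑ i', ∑ j', (a i' * b j' + 1) :=
          single_le_sum (f := fun i' => ∑ j', (a i' * b j' + 1)) (fun _ _ => Nat.zero_le _)
            (mem_univ i)
      _ ≤ N := le_add_self
  refine ⟨N, le_add_right le_rfl, ?_⟩
  rw [detOneAddXPow]
  congr 1
  ext i j : 1
  rw [of_apply, of_apply, ← sum_natCast_pow_mul_truncLogPow (hN i j)]
  refine sum_congr rfl fun s _ => ?_
  push_cast
  ring

lemma X_pow_dvd_natCast_pow_mul_truncLogPow (m N s : ℕ) :
    X ^ s ∣ (m : ℚ[X]) ^ s * truncLogPow N s :=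
  (X_pow_dvd_truncLogPow N s).mul_left _

lemma coeff_detOneAddXPow_rat_of_lt {k : ℕ} (hk : k < ∑ i : Fin n, (i : ℕ)) :
    (detOneAddXPow a b ℚ).coeff k = 0 := by
  obtain ⟨N, -, h⟩ := exists_detOneAddXPow_rat_eq_det_sum a b
  rw [h]
  exact coeff_det_of_sum_mul_eq_zero _ (fun _ s => X_pow_dvd_natCast_pow_mul_truncLogPow _ N s) _ hk

lemma coeff_detOneAddXPow_rat_mul_prod_factorial :
    (detOneAddXPow a b ℚ).coeff (∑ i : Fin n, (i : ℕ)) * ∏ i : Fin n, ((i : ℕ)! : ℚ) =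
      (vandermonde fun i => (a i : ℚ)).det * (vandermonde fun i => (b i : ℚ)).det := by
  obtain ⟨N, hnN, h⟩ := exists_detOneAddXPow_rat_eq_det_sum a b
  have hV (v : Fin n → ℕ) :
      (vandermonde fun i => (v i : ℚ[X])).det = C (vandermonde fun i => (v i : ℚ)).det := by
    rw [C.map_det_vandermonde]
    congr
  rw [h, coeff_det_of_sum_mul_eq_of_range_subset _
    (fun _ s => X_pow_dvd_natCast_pow_mul_truncLogPow _ N s) (range_subset_range.mpr hnN),
    det_of_sum_range_pow_mul, hV, hV, mul_right_comm, ← C_mul,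
    coeff_C_mul, coeff_prod_of_X_pow_dvd (fun s : Fin n => truncLogPow N s) (fun s => s)
      fun s => X_pow_dvd_truncLogPow N s]
  simp_rw [coeff_truncLogPow_self (Fin.is_lt _ |>.trans_le hnN), prod_inv_distrib]
  field_simp

lemma intCast_coeff_detOneAddXPow (k : ℕ) :
    ((detOneAddXPow a b ℤ).coeff k : ℚ) = (detOneAddXPow a b ℚ).coeff k := by
  rw [← map_detOneAddXPow a b (Int.castRingHom ℚ), coeff_map, eq_intCast]

lemma coeff_detOneAddXPow_of_lt {k : ℕ} (hk : k < ∑ i : Fin n, (i : ℕ)) :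
    (detOneAddXPow a b ℤ).coeff k = 0 := by
  exact_mod_cast (intCast_coeff_detOneAddXPow a b k).trans (coeff_detOneAddXPow_rat_of_lt a b hk)

lemma coeff_detOneAddXPow_mul_prod_factorial :
    (detOneAddXPow a b ℤ).coeff (∑ i : Fin n, (i : ℕ)) * ∏ i : Fin n, ((i : ℕ)! : ℤ) =
      (vandermonde fun i => (a i : ℤ)).det * (vandermonde fun i => (b i : ℤ)).det := by
  have hV (v : Fin n → ℕ) := (Int.castRingHom ℚ).map_det_vandermonde fun i => (v i : ℤ)
  simp only [eq_intCast, Function.comp_def, Int.cast_natCast] at hV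
  apply Int.cast_injective (α := ℚ)
  rw [Int.cast_mul, Int.cast_mul, hV, hV, intCast_coeff_detOneAddXPow, Int.cast_prod]
  exact_mod_cast coeff_detOneAddXPow_rat_mul_prod_factorial a b

end DetOneAddXPow

lemma IsPrimitiveRoot.dvd_coeff_of_aeval_sub_one_eq_zero {K : Type*} [Field K] [CharZero K]
    {p : ℕ} [hp : Fact p.Prime] {ζ : K} (hζ : IsPrimitiveRoot ζ p) {P : ℤ[X]} {D : ℕ}
    (hlow : ∀ k < D, P.coeff k = 0) (hP : aeval (ζ - 1) P = 0) : (p : ℤ) ∣ P.coeff D := by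
  obtain ⟨G, rfl⟩ := X_pow_dvd_iff.mpr hlow
  have hG : aeval (ζ - 1) G = 0 := by
    simpa [sub_eq_zero, hζ.ne_one hp.out.one_lt] using hP
  have hdvd : cyclotomic p ℤ ∣ G.comp (X - 1) := by
    rw [cyclotomic_eq_minpoly hζ hp.out.pos]
    exact minpoly.isIntegrallyClosed_dvd (hζ.isIntegral hp.out.pos)
      (by simpa [aeval_comp] using hG)
  simpa [eval_one_cyclotomic_prime, eval_comp, coeff_X_pow_mul', coeff_zero_eq_eval_zero] using
    eval_dvd (x := 1) hdvd

theorem IsPrimitiveRoot.det_pow_val_mul_val_ne_zero {K : Type*} [Field K] [CharZero K] {p : ℕ}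
    [Fact p.Prime] {ζ : K} (hζ : IsPrimitiveRoot ζ p) {n : ℕ} {a b : Fin n → ZMod p}
    (ha : Injective a) (hb : Injective b) :
    (of fun i j => ζ ^ ((a i).val * (b j).val)).det ≠ 0 := by
  intro h0
  have hdvd := hζ.dvd_coeff_of_aeval_sub_one_eq_zero
    (fun k hk => coeff_detOneAddXPow_of_lt (fun i => (a i).val) (fun j => (b j).val) hk)
    ((aeval_sub_one_detOneAddXPow _ _ ζ).trans h0)
  have hV (v : Fin n → ZMod p) (hv : Injective v) :
      ((vandermonde fun i => ((v i).val : ℤ)).det : ZMod p) ≠ 0 := by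
    rw [← eq_intCast (Int.castRingHom _), RingHom.map_det_vandermonde]
    simpa [Function.comp_def] using det_vandermonde_ne_zero_iff.mpr hv
  apply mul_ne_zero (hV a ha) (hV b hb)
  rw [← Int.cast_mul, ← coeff_detOneAddXPow_mul_prod_factorial, Int.cast_mul,
    (ZMod.intCast_zmod_eq_zero_iff_dvd _ p).mpr hdvd, zero_mul]

theorem Matrix.card_lt_card_support_add_card_support_mulVec {ι K : Type*} [Fintype ι]
    [DecidableEq ι] [Field K] [DecidableEq K] (M : Matrix ι ι K)
    (hM : ∀ (n : ℕ) (r c : Fin n → ι), Injective r → Injective c → (M.submatrix r c).det ≠ 0)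
    {v : ι → K} (hv : v ≠ 0) :
    Fintype.card ι < #{i | v i ≠ 0} + #{i | (M *ᵥ v) i ≠ 0} := by
  by_contra! h
  set A : Finset ι := {i | v i ≠ 0}
  set B : Finset ι := {i | (M *ᵥ v) i ≠ 0}
  have hAB : #A ≤ #Bᶜ := by rw [card_compl]; omega
  let c : Fin #A ↪ ι := A.equivFin.symm.toEmbedding.trans (Embedding.subtype _)
  let r : Fin #A ↪ ι :=
    (Fin.castLEEmb hAB).trans (Bᶜ.equivFin.symm.toEmbedding.trans (Embedding.subtype _))
  have hsub : M.submatrix r c *ᵥ (v ∘ c) = 0 := by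
    ext i
    have hri : (M *ᵥ v) (r i) = 0 := by
      simpa [B, r] using mem_compl.mp (Bᶜ.equivFin.symm (Fin.castLEEmb hAB i)).2
    calc ∑ j, M (r i) (c j) * v (c j) = ∑ x : A, M (r i) x * v x :=
          Fintype.sum_equiv A.equivFin.symm _ _ fun _ => rfl
      _ = ∑ x ∈ A, M (r i) x * v x := sum_coe_sort A fun x => M (r i) x * v x
      _ = ∑ x, M (r i) x * v x := sum_subset (subset_univ A) fun x _ hx => by simp_all [A]
      _ = 0 := hri
  obtain ⟨x, hx⟩ := Function.ne_iff.mp hv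
  have hxA : x ∈ A := by simpa [A] using hx
  have := congrFun (eq_zero_of_mulVec_eq_zero (hM _ r c r.injective c.injective) hsub)
    (A.equivFin ⟨x, hxA⟩)
  exact hx (by simpa [c] using this)

lemma dft_eq_smul_mulVec (n : ℕ) [NeZero n] (f : ZMod n → ℂ) :
    dft n f = (n : ℂ) ^ (-(1 / 2 : ℂ)) •
      (of fun k j : ZMod n => Complex.exp (2 * π * Complex.I / n) ^ (k.val * j.val)) *ᵥ f := by
  ext k
  simp only [dft, Pi.smul_apply, smul_eq_mul, mulVec, dotProduct, of_apply]
  congr 1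
  refine sum_congr rfl fun j _ => ?_
  rw [← Complex.exp_nat_mul, mul_comm (f j)]
  congr 2
  push_cast
  ring

/-- **Tao's uncertainty principle for cyclic groups of prime order.** For a
prime `p` and a nonzero function `f : ℤ/pℤ → ℂ`,
`|supp f| + |supp f̂| ≥ p + 1`. -/
theorem tao_uncertainty (p : ℕ) (hp : p.Prime) [NeZero p] (f : ZMod p → ℂ) (hf : f ≠ 0) :
    p + 1 ≤ Set.ncard {x : ZMod p | f x ≠ 0} + Set.ncard {k : ZMod p | dft p f k ≠ 0} := by
  have : Fact p.Prime := ⟨hp⟩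
  have hζ := Complex.isPrimitiveRoot_exp p (NeZero.ne p)
  have hscale : (p : ℂ) ^ (-(1 / 2 : ℂ)) ≠ 0 := by simp [NeZero.ne p]
  have key := card_lt_card_support_add_card_support_mulVec
    (of fun k j : ZMod p => Complex.exp (2 * π * Complex.I / p) ^ (k.val * j.val))
    (fun _ _ _ hr hc => hζ.det_pow_val_mul_val_ne_zero hr hc) hf
  rw [ZMod.card] at key
  simp only [Set.ncard_eq_toFinset_card', Set.toFinset_ofPred, dft_eq_smul_mulVec, Pi.smul_apply,
    smul_eq_mul, ne_eq, mul_eq_zero, hscale, false_or] at key ⊢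
  omega
end

section
/- Heisenberg-like uncertainty principles for general norms (Wigderson–Wigderson; Theorem 3.10 of the paper). For every nonzero Schwartz function f : ℝ → ℂ and every q with 1 < q ≤ ∞, one has (∫_ℝ x² |f(x)|² dx) · (∫_ℝ x² |f̂(x)|² dx) ≥ 2^{-(10q-8)/(q-1)} ‖f‖_q² ‖f̂‖_q² (for q = ∞ the constant is interpreted as 2^{-10}). -/
/-!
Write `A = ‖f‖₁` and `B = ‖f̂‖₁`, so that `‖f̂‖_∞ ≤ A` and, by Fourier inversion, `‖f‖_∞ ≤ B`.
For any `g`, splitting `∫ |g|` at `|x| = T`, bounding the bulk by `2T‖g‖_∞` and the tail by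
AM–GM against the weight `x⁻²`, and optimising in `T` gives `‖g‖₁³ ≤ 27 ‖g‖_∞ ∫ x²|g|²`.
Applied to `f` and `f̂` this yields `A³ ≤ 27 B ∫ x²|f|²` and `B³ ≤ 27 A ∫ x²|f̂|²`, hence
`(AB)² ≤ 27² ∫ x²|f|² ∫ x²|f̂|²`. The interpolation `‖h‖_q ≤ ‖h‖_∞^{1-1/q} ‖h‖₁^{1/q}` gives
`‖f‖_q ‖f̂‖_q ≤ AB`, and `27² ≤ 2¹⁰ ≤ 2^{(10q-8)/(q-1)}`.
-/

open MeasureTheory ENNReal Set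
open scoped FourierTransform SchwartzMap

section WeightIntegral

theorem integral_Ioi_inv_sq {T : ℝ} (hT : 0 < T) : ∫ x in Ioi T, (x ^ 2)⁻¹ = T⁻¹ := by
  have h := integral_Ioi_rpow_of_lt (by norm_num : (-2 : ℝ) < -1) hT
  rw [setIntegral_congr_fun measurableSet_Ioi fun x hx => by
    rw [Real.rpow_neg (hT.trans hx).le, Real.rpow_two]] at h
  rw [h]
  norm_num [Real.rpow_neg_one]

theorem integral_inv_sq_of_lt_abs {T : ℝ} (hT : 0 < T) :
    ∫ x in {x : ℝ | T < |x|}, (x ^ 2)⁻¹ = 2 / T := by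
  calc ∫ x in {x : ℝ | T < |x|}, (x ^ 2)⁻¹
      = ∫ x, (Ioi T).indicator (fun y => (y ^ 2)⁻¹) |x| := by
        rw [← integral_indicator (measurableSet_lt measurable_const measurable_abs)]
        congr 1 with x
        by_cases hx : T < |x| <;> simp [indicator, hx, sq_abs]
    _ = 2 * ∫ x in Ioi T, (x ^ 2)⁻¹ := by
        rw [integral_comp_abs, integral_indicator measurableSet_Ioi,
          Measure.restrict_restrict measurableSet_Ioi, Ioi_inter_Ioi, max_eq_left hT.le]
    _ = 2 / T := by rw [integral_Ioi_inv_sq hT, div_eq_mul_inv]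

theorem integrableOn_inv_sq_of_lt_abs {T : ℝ} (hT : 0 < T) :
    IntegrableOn (fun x : ℝ => (x ^ 2)⁻¹) {x : ℝ | T < |x|} :=
  Integrable.of_integral_ne_zero (by rw [integral_inv_sq_of_lt_abs hT]; positivity)

end WeightIntegral

section MomentBound

variable {E : Type*} [NormedAddCommGroup E] {g : ℝ → E}

theorem two_mul_le_div_add_mul_sq_div {s a y : ℝ} (hs : 0 < s) (ha : 0 < a) :
    2 * y ≤ a / s + s * y ^ 2 / a := by
  rw [div_add_div _ _ hs.ne' ha.ne', le_div_iff₀ (by positivity)]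
  nlinarith [sq_nonneg (a - s * y)]

theorem setIntegral_norm_le_of_lt_abs
    (hV : Integrable (fun x => x ^ 2 * ‖g x‖ ^ 2)) {T a : ℝ} (hT : 0 < T) (ha : 0 < a) :
    ∫ x in {x : ℝ | T < |x|}, ‖g x‖ ≤ a / T + (∫ x, x ^ 2 * ‖g x‖ ^ 2) / (2 * a) := by
  set S := {x : ℝ | T < |x|}
  have hS : MeasurableSet S := measurableSet_lt measurable_const measurable_abs
  have hw : IntegrableOn (fun x => a * (x ^ 2)⁻¹) S :=
    (integrableOn_inv_sq_of_lt_abs hT).const_mul a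
  have hv : IntegrableOn (fun x => x ^ 2 * ‖g x‖ ^ 2 / a) S := hV.integrableOn.div_const a
  calc ∫ x in S, ‖g x‖ ≤ ∫ x in S, (a * (x ^ 2)⁻¹ + x ^ 2 * ‖g x‖ ^ 2 / a) / 2 := by
        refine integral_mono_of_nonneg (.of_forall fun x => norm_nonneg _)
          ((hw.add hv).div_const 2) ((ae_restrict_mem hS).mono fun x hx => ?_)
        have hx2 : 0 < x ^ 2 := by
          have : x ≠ 0 := abs_pos.mp (hT.trans hx)
          positivity
        have := two_mul_le_div_add_mul_sq_div (y := ‖g x‖) hx2 ha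
        simp only [← div_eq_mul_inv]
        linarith
    _ = a / T + (∫ x in S, x ^ 2 * ‖g x‖ ^ 2) / (2 * a) := by
        rw [integral_div, integral_add hw hv, integral_const_mul, integral_div,
          integral_inv_sq_of_lt_abs hT]
        field_simp
    _ ≤ a / T + (∫ x, x ^ 2 * ‖g x‖ ^ 2) / (2 * a) := by
        gcongr
        · exact .of_forall fun x => by simp only [Pi.zero_apply]; positivity
        · exact Measure.restrict_le_self

theorem integral_norm_le_of_ae_norm_le (hg : Integrable g)
    (hV : Integrable (fun x => x ^ 2 * ‖g x‖ ^ 2)) {C : ℝ} (hC : ∀ᵐ x, ‖g x‖ ≤ C)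
    {T a : ℝ} (hT : 0 < T) (ha : 0 < a) :
    ∫ x, ‖g x‖ ≤ 2 * T * C + a / T + (∫ x, x ^ 2 * ‖g x‖ ^ 2) / (2 * a) := by
  have hS : MeasurableSet {x : ℝ | T < |x|} := measurableSet_lt measurable_const measurable_abs
  have hSc : {x : ℝ | T < |x|}ᶜ = Icc (-T) T := by ext x; simp [abs_le]
  have head : ∫ x in Icc (-T) T, ‖g x‖ ≤ 2 * T * C := by
    have := norm_setIntegral_le_of_norm_le_const_ae (f := fun x => ‖g x‖) (s := Icc (-T) T)
      measure_Icc_lt_top (ae_restrict_of_ae (hC.mono fun x hx => by rwa [norm_norm]))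
    rw [Real.volume_real_Icc_of_le (by linarith)] at this
    linarith [Real.le_norm_self (∫ x in Icc (-T) T, ‖g x‖)]
  rw [← integral_add_compl hS hg.norm, hSc]
  linarith [setIntegral_norm_le_of_lt_abs hV hT ha]

theorem integral_norm_pow_three_le (hg : Integrable g)
    (hV : Integrable (fun x => x ^ 2 * ‖g x‖ ^ 2)) {C : ℝ} (hC : ∀ᵐ x, ‖g x‖ ≤ C) :
    (∫ x, ‖g x‖) ^ 3 ≤ 27 * C * ∫ x, x ^ 2 * ‖g x‖ ^ 2 := by
  set L := ∫ x, ‖g x‖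
  set V := ∫ x, x ^ 2 * ‖g x‖ ^ 2
  have hL : 0 ≤ L := integral_nonneg fun x => norm_nonneg _
  have hV0 : 0 ≤ V := integral_nonneg fun x => by positivity
  have hC0 : 0 ≤ C := by
    obtain ⟨x, hx⟩ := hC.exists
    exact (norm_nonneg _).trans hx
  rcases hL.eq_or_lt with hL0 | hL0
  · rw [← hL0, zero_pow three_ne_zero]
    positivity
  rcases hC0.eq_or_lt with hC0 | hC0
  · have hL0' : L = 0 := integral_eq_zero_of_ae <| hC.mono fun x hx =>
      le_antisymm (hx.trans hC0.ge) (norm_nonneg (g x))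
    exact absurd hL0' hL0.ne'
  -- `T = L / (6C)` and `a = L² / (18C)` make the first two terms equal to `L / 3` each
  have h := integral_norm_le_of_ae_norm_le hg hV hC (T := L / (6 * C)) (a := L ^ 2 / (18 * C))
    (by positivity) (by positivity)
  have key : L / 3 ≤ 9 * C * V / L ^ 2 := by
    have e : 2 * (L / (6 * C)) * C + L ^ 2 / (18 * C) / (L / (6 * C)) +
        V / (2 * (L ^ 2 / (18 * C))) = 2 * L / 3 + 9 * C * V / L ^ 2 := by
      field_simp
      ring
    linarith
  rw [le_div_iff₀ (by positivity)] at key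
  linarith

theorem eLpNorm_one_toReal_pow_three_le (hg : Integrable g) (hg_top : MemLp g ∞)
    (hV : Integrable (fun x => x ^ 2 * ‖g x‖ ^ 2)) :
    (eLpNorm g 1 volume).toReal ^ 3 ≤
      27 * (eLpNorm g ∞ volume).toReal * ∫ x, x ^ 2 * ‖g x‖ ^ 2 := by
  rw [eLpNorm_one_eq_lintegral_enorm, ← integral_norm_eq_lintegral_enorm hg.aestronglyMeasurable]
  refine integral_norm_pow_three_le hg hV ((ae_le_eLpNormEssSup (f := g)).mono fun x hx => ?_)
  rw [← ofReal_le_iff_le_toReal hg_top.eLpNorm_ne_top, ofReal_norm, eLpNorm_exponent_top]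
  exact hx

end MomentBound

section Interpolation

variable {α E : Type*} [MeasurableSpace α] {μ : Measure α} [NormedAddCommGroup E]

theorem toReal_inv_le_one_of_one_le {q : ℝ≥0∞} (hq : 1 ≤ q) : q.toReal⁻¹ ≤ 1 := by
  rcases eq_or_ne q ∞ with rfl | hq_top
  · simp
  · exact inv_le_one_of_one_le₀ (by simpa using ENNReal.toReal_mono hq_top hq)

/-- For `q = ∞` the exponents are `1` and `0`, since `(∞ : ℝ≥0∞).toReal = 0`. -/
theorem eLpNorm_le_eLpNorm_top_rpow_mul_eLpNorm_one_rpow {f : α → E}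
    (hf : AEStronglyMeasurable f μ) {q : ℝ≥0∞} (hq : 1 ≤ q) :
    eLpNorm f q μ ≤ eLpNorm f ∞ μ ^ (1 - q.toReal⁻¹) * eLpNorm f 1 μ ^ q.toReal⁻¹ := by
  rcases eq_or_ne q ∞ with rfl | hq_top
  · simp
  set t := q.toReal
  have ht : 1 ≤ t := by simpa using ENNReal.toReal_mono hq_top hq
  have ht0 : 0 < t := by linarith
  rw [eLpNorm_eq_lintegral_rpow_enorm_toReal (by positivity) hq_top, eLpNorm_exponent_top,
    eLpNorm_one_eq_lintegral_enorm]
  have h : ∫⁻ x, ‖f x‖ₑ ^ t ∂μ ≤ eLpNormEssSup f μ ^ (t - 1) * ∫⁻ x, ‖f x‖ₑ ∂μ := by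
    rw [← lintegral_const_mul'' _ hf.enorm]
    refine lintegral_mono_ae ((ae_le_eLpNormEssSup (f := f)).mono fun x hx => ?_)
    calc ‖f x‖ₑ ^ t = ‖f x‖ₑ ^ (t - 1) * ‖f x‖ₑ := by
          simpa using ENNReal.rpow_add_of_nonneg (x := ‖f x‖ₑ) (t - 1) 1 (by linarith) one_pos.le
      _ ≤ _ := by gcongr
  calc (∫⁻ x, ‖f x‖ₑ ^ t ∂μ) ^ (1 / t)
      ≤ (eLpNormEssSup f μ ^ (t - 1) * ∫⁻ x, ‖f x‖ₑ ∂μ) ^ (1 / t) := by gcongr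
    _ = _ := by
        rw [ENNReal.mul_rpow_of_nonneg _ _ (by positivity), ← ENNReal.rpow_mul, one_div]
        congr 2
        field_simp

variable {β F : Type*} [MeasurableSpace β] {ν : Measure β} [NormedAddCommGroup F]

theorem eLpNorm_mul_eLpNorm_le_eLpNorm_one_mul_eLpNorm_one {f : α → E} {g : β → F}
    (hf : AEStronglyMeasurable f μ) (hg : AEStronglyMeasurable g ν)
    (hfg : eLpNorm f ∞ μ ≤ eLpNorm g 1 ν) (hgf : eLpNorm g ∞ ν ≤ eLpNorm f 1 μ)
    {q : ℝ≥0∞} (hq : 1 ≤ q) :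
    eLpNorm f q μ * eLpNorm g q ν ≤ eLpNorm f 1 μ * eLpNorm g 1 ν := by
  set s := q.toReal⁻¹
  have hs : 0 ≤ s := inv_nonneg.2 toReal_nonneg
  have hs' : 0 ≤ 1 - s := sub_nonneg.2 (toReal_inv_le_one_of_one_le hq)
  calc eLpNorm f q μ * eLpNorm g q ν
      ≤ (eLpNorm f ∞ μ ^ (1 - s) * eLpNorm f 1 μ ^ s) *
          (eLpNorm g ∞ ν ^ (1 - s) * eLpNorm g 1 ν ^ s) := by
        gcongr
        · exact eLpNorm_le_eLpNorm_top_rpow_mul_eLpNorm_one_rpow hf hq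
        · exact eLpNorm_le_eLpNorm_top_rpow_mul_eLpNorm_one_rpow hg hq
    _ ≤ (eLpNorm g 1 ν ^ (1 - s) * eLpNorm f 1 μ ^ s) *
          (eLpNorm f 1 μ ^ (1 - s) * eLpNorm g 1 ν ^ s) := by gcongr
    _ = eLpNorm f 1 μ ^ (s + (1 - s)) * eLpNorm g 1 ν ^ ((1 - s) + s) := by
        rw [ENNReal.rpow_add_of_nonneg _ _ hs hs', ENNReal.rpow_add_of_nonneg _ _ hs' hs]
        ring
    _ = eLpNorm f 1 μ * eLpNorm g 1 ν := by simp

end Interpolation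

section Fourier

variable {V E : Type*} [NormedAddCommGroup V] [InnerProductSpace ℝ V] [FiniteDimensional ℝ V]
  [MeasurableSpace V] [BorelSpace V] [NormedAddCommGroup E] [NormedSpace ℂ E]

theorem enorm_fourier_le_eLpNorm_one (f : V → E) (w : V) : ‖𝓕 f w‖ₑ ≤ eLpNorm f 1 volume := by
  rw [Real.fourier_eq, eLpNorm_one_eq_lintegral_enorm]
  refine (enorm_integral_le_lintegral_enorm _).trans_eq ?_
  simp only [← ofReal_norm, Circle.norm_smul]

theorem eLpNorm_fourier_top_le_eLpNorm_one (f : V → E) :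
    eLpNorm (𝓕 f) ∞ volume ≤ eLpNorm f 1 volume := by
  rw [eLpNorm_exponent_top]
  exact eLpNormEssSup_le_of_ae_enorm_bound (.of_forall (enorm_fourier_le_eLpNorm_one f))

theorem SchwartzMap.eLpNorm_top_le_eLpNorm_fourier_one [CompleteSpace E] (f : 𝓢(V, E)) :
    eLpNorm f ∞ volume ≤ eLpNorm (𝓕 (f : V → E)) 1 volume := by
  rw [eLpNorm_exponent_top]
  refine eLpNormEssSup_le_of_ae_enorm_bound (.of_forall fun x => ?_)
  have hinv : f x = 𝓕 (𝓕 (f : V → E)) (-x) := by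
    rw [← Real.fourierInv_eq_fourier_neg, ← SchwartzMap.fourier_coe,
      ← SchwartzMap.fourierInv_coe, FourierTransform.fourierInv_fourier_eq]
  rw [hinv]
  exact enorm_fourier_le_eLpNorm_one _ _

end Fourier

theorem SchwartzMap.integrable_sq_mul_norm_sq {E : Type*} [NormedAddCommGroup E]
    [NormedSpace ℝ E] (f : 𝓢(ℝ, E)) : Integrable (fun x : ℝ => x ^ 2 * ‖f x‖ ^ 2) := by
  refine ((f.integrable_pow_mul volume 2).bdd_mul (c := SchwartzMap.seminorm ℝ 0 0 f)
    f.continuous.norm.aestronglyMeasurable (.of_forall fun x => ?_)).congr (.of_forall fun x => ?_)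
  · simpa using f.norm_le_seminorm ℝ x
  · simp only [Real.norm_eq_abs, sq_abs]
    ring

theorem mul_sq_le_of_pow_three_le {A B V W c : ℝ} (hA : 0 ≤ A) (hB : 0 ≤ B) (hV : 0 ≤ V)
    (hW : 0 ≤ W) (hc : 0 ≤ c) (hAV : A ^ 3 ≤ c * B * V) (hBW : B ^ 3 ≤ c * A * W) :
    (A * B) ^ 2 ≤ c ^ 2 * (V * W) := by
  rcases (mul_nonneg hA hB).eq_or_lt with hAB | hAB
  · rw [← hAB, zero_pow two_ne_zero]
    positivity
  refine le_of_mul_le_mul_right ?_ hAB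
  calc (A * B) ^ 2 * (A * B) = A ^ 3 * B ^ 3 := by ring
    _ ≤ (c * B * V) * (c * A * W) := mul_le_mul hAV hBW (by positivity) (by positivity)
    _ = c ^ 2 * (V * W) * (A * B) := by ring

theorem uncertainty_constant_le {q : ℝ≥0∞} (hq : 1 < q) :
    (if q = ∞ then (2 : ℝ) ^ (-(10 : ℝ))
      else (2 : ℝ) ^ (-((10 * q.toReal - 8) / (q.toReal - 1)))) ≤ 1 / 1024 := by
  have h : (2 : ℝ) ^ (-(10 : ℝ)) = 1 / 1024 := by norm_num [Real.rpow_neg]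
  split_ifs with hq_top
  · exact h.le
  have ht : 1 < q.toReal := by simpa using (toReal_lt_toReal one_ne_top hq_top).2 hq
  rw [← h]
  refine Real.rpow_le_rpow_of_exponent_le one_le_two (neg_le_neg ?_)
  rw [le_div_iff₀ (by linarith)]
  linarith

theorem wigderson_uncertainty_general (f : SchwartzMap ℝ ℂ) (q : ℝ≥0∞) (hq : 1 < q) :
    (∫ x : ℝ, x ^ 2 * ‖f x‖ ^ 2) *
      (∫ x : ℝ, x ^ 2 * ‖VectorFourier.fourierIntegral Real.fourierChar volume (innerₗ ℝ) (⇑f) x‖ ^ 2) ≥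
      (if q = ∞ then (2 : ℝ) ^ (-(10 : ℝ))
        else (2 : ℝ) ^ (-((10 * q.toReal - 8) / (q.toReal - 1)))) *
        (eLpNorm (⇑f) q volume).toReal ^ 2 *
        (eLpNorm (VectorFourier.fourierIntegral Real.fourierChar volume (innerₗ ℝ) (⇑f)) q volume).toReal ^ 2 := by
  have hF : VectorFourier.fourierIntegral 𝐞 volume (innerₗ ℝ) ⇑f = ⇑(𝓕 f : 𝓢(ℝ, ℂ)) := rfl
  rw [hF, ge_iff_le]
  set g : 𝓢(ℝ, ℂ) := 𝓕 f
  have hfg : eLpNorm f ∞ volume ≤ eLpNorm g 1 volume := f.eLpNorm_top_le_eLpNorm_fourier_one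
  have hgf : eLpNorm g ∞ volume ≤ eLpNorm f 1 volume := eLpNorm_fourier_top_le_eLpNorm_one f
  have hfin : ∀ h : 𝓢(ℝ, ℂ), eLpNorm h 1 volume ≠ ∞ :=
    fun h => (h.memLp 1 volume).eLpNorm_ne_top
  have hN : (eLpNorm f q volume).toReal * (eLpNorm g q volume).toReal ≤
      (eLpNorm f 1 volume).toReal * (eLpNorm g 1 volume).toReal := by
    rw [← toReal_mul, ← toReal_mul]
    exact toReal_mono (mul_ne_top (hfin f) (hfin g))
      (eLpNorm_mul_eLpNorm_le_eLpNorm_one_mul_eLpNorm_one f.continuous.aestronglyMeasurable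
        g.continuous.aestronglyMeasurable hfg hgf hq.le)
  have hVf : 0 ≤ ∫ x : ℝ, x ^ 2 * ‖f x‖ ^ 2 := integral_nonneg fun x => by positivity
  have hVg : 0 ≤ ∫ x : ℝ, x ^ 2 * ‖g x‖ ^ 2 := integral_nonneg fun x => by positivity
  have hf3 := eLpNorm_one_toReal_pow_three_le f.integrable (f.memLp ∞ volume)
    f.integrable_sq_mul_norm_sq
  have hg3 := eLpNorm_one_toReal_pow_three_le g.integrable (g.memLp ∞ volume)
    g.integrable_sq_mul_norm_sq
  have hprod := mul_sq_le_of_pow_three_le toReal_nonneg toReal_nonneg hVf hVg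
    (by norm_num : (0 : ℝ) ≤ 27) (hf3.trans (by gcongr; exact hfin g))
    (hg3.trans (by gcongr; exact hfin f))
  calc _ = _ * ((eLpNorm f q volume).toReal * (eLpNorm g q volume).toReal) ^ 2 := by ring
    _ ≤ 1 / 1024 * ((eLpNorm f 1 volume).toReal * (eLpNorm g 1 volume).toReal) ^ 2 := by
        gcongr
        exact uncertainty_constant_le hq
    _ ≤ 1 / 1024 * (27 ^ 2 * ((∫ x : ℝ, x ^ 2 * ‖f x‖ ^ 2) * ∫ x : ℝ, x ^ 2 * ‖g x‖ ^ 2)) := by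
        gcongr
    _ ≤ _ := by linarith [mul_nonneg hVf hVg]

/-- **Heisenberg-like uncertainty principles for general norms**
(Wigderson–Wigderson). For every nonzero Schwartz function `f : ℝ → ℂ` and every
`1 < q ≤ ∞`,
`(∫ x²|f(x)|² dx)(∫ x²|f̂(x)|² dx) ≥ 2^{-(10q-8)/(q-1)} ‖f‖_q² ‖f̂‖_q²`,
where for `q = ∞` the constant is `2^{-10}`. -/
theorem wigderson_uncertainty (f : SchwartzMap ℝ ℂ) (hf : f ≠ 0) (q : ℝ≥0∞) (hq : 1 < q) :
    (∫ x : ℝ, x ^ 2 * ‖f x‖ ^ 2) *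
      (∫ x : ℝ, x ^ 2 * ‖VectorFourier.fourierIntegral Real.fourierChar volume (innerₗ ℝ) (⇑f) x‖ ^ 2) ≥
      (if q = ∞ then (2 : ℝ) ^ (-(10 : ℝ))
        else (2 : ℝ) ^ (-((10 * q.toReal - 8) / (q.toReal - 1)))) *
        (eLpNorm (⇑f) q volume).toReal ^ 2 *
        (eLpNorm (VectorFourier.fourierIntegral Real.fourierChar volume (innerₗ ℝ) (⇑f)) q volume).toReal ^ 2 :=
  wigderson_uncertainty_general f q hq
end

section
/- Perron–Frobenius theorem, existence part (Theorem 7.1 of the paper). Let n ≥ 1 and let A be a real n × n matrix with all entries nonnegative. Then there exists a nonzero vector v ∈ ℝⁿ with all entries nonnegative such that A v = r(A) v, where r(A) is the spectral radius of A. -/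
/-!
The Collatz–Wielandt number `r(A)`, the largest `s ≥ 0` with `s • y ≤ A y` for some `y` in the
standard simplex, dominates `‖μ‖` for every complex eigenvalue `μ`: the triangle inequality gives
`‖μ‖ |w| ≤ A |w|` for an eigenvector `w`. For a strictly positive matrix a maximizing `y` is an
eigenvector, since otherwise applying `A` to the nonzero slack `A y - r(A) y ≥ 0` would admit a
strictly larger `s`. A nonnegative `A` is the limit of the positive matrices `A + J / (k + 1)`
(`J` the all-ones matrix), whose Collatz–Wielandt numbers lie in `[r(A), r(A + J)]`; a limit
point of their normalized eigenvectors is a nonnegative eigenvector of `A` with an eigenvalue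
`ρ ≥ r(A)`, and `ρ ≤ r(A)` by maximality. So `r(A)` is itself an eigenvalue, hence equals the
spectral radius.
-/

/-- The spectral radius of a real square matrix: the supremum of `|μ|` over all
complex eigenvalues `μ` (roots of the characteristic polynomial over `ℂ`). -/
noncomputable def specRad (n : ℕ) (A : Matrix (Fin n) (Fin n) ℝ) : ℝ :=
  sSup {t : ℝ | ∃ μ : ℂ,
    ((A.map (Complex.ofReal)).charpoly).IsRoot μ ∧ t = ‖μ‖}

open Filter Topology

theorem ne_zero_of_mem_stdSimplex {𝕜 ι : Type*} [Semiring 𝕜] [PartialOrder 𝕜] [Nontrivial 𝕜]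
    [Fintype ι] {y : ι → 𝕜} (hy : y ∈ stdSimplex 𝕜 ι) : y ≠ 0 := by
  rintro rfl
  simpa using hy.2

theorem exists_gt_smul_le_of_forall_mul_lt {ι : Type*} [Finite ι] {r : ℝ} {w v : ι → ℝ}
    (h : ∀ i, r * w i < v i) : ∃ s > r, s • w ≤ v := by
  have hev : ∀ᶠ s in 𝓝[>] r, ∀ i, s * w i < v i :=
    nhdsWithin_le_nhds <| eventually_all.mpr fun i =>
      (continuous_id.mul continuous_const).continuousAt.eventually_lt continuousAt_const (h i)
  obtain ⟨s, hs, hsr⟩ := (hev.and self_mem_nhdsWithin).exists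
  exact ⟨s, hsr, fun i => (hs i).le⟩

namespace Matrix

variable {ι : Type*} [Fintype ι]

theorem isRoot_charpoly_iff_exists_mulVec_eq_smul [DecidableEq ι] {K : Type*} [Field K]
    {A : Matrix ι ι K} {μ : K} : A.charpoly.IsRoot μ ↔ ∃ w ≠ 0, A *ᵥ w = μ • w := by
  rw [Polynomial.IsRoot, eval_charpoly, ← exists_mulVec_eq_zero_iff]
  simp only [sub_mulVec, scalar_apply, diagonal_const_mulVec, sub_eq_zero, eq_comm]

theorem mulVec_nonneg {A : Matrix ι ι ℝ} (hA : ∀ i j, 0 ≤ A i j) {y : ι → ℝ} (hy : 0 ≤ y) :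
    0 ≤ A *ᵥ y :=
  fun i => Finset.sum_nonneg fun j _ => mul_nonneg (hA i j) (hy j)

theorem mulVec_le_mulVec_of_le {A B : Matrix ι ι ℝ} (hAB : ∀ i j, A i j ≤ B i j) {y : ι → ℝ}
    (hy : 0 ≤ y) : A *ᵥ y ≤ B *ᵥ y :=
  fun i => Finset.sum_le_sum fun j _ => mul_le_mul_of_nonneg_right (hAB i j) (hy j)

theorem mulVec_pos {A : Matrix ι ι ℝ} (hA : ∀ i j, 0 < A i j) {y : ι → ℝ} (hy : 0 ≤ y)
    (hy0 : y ≠ 0) (i : ι) : 0 < (A *ᵥ y) i := by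
  obtain ⟨j, hj⟩ := Function.ne_iff.mp hy0
  exact Finset.sum_pos' (fun k _ => mul_nonneg (hA i k).le (hy k))
    ⟨j, Finset.mem_univ j, mul_pos (hA i j) ((hy j).lt_of_ne' hj)⟩

def collatzWielandtSet (A : Matrix ι ι ℝ) : Set ℝ :=
  {s | 0 ≤ s ∧ ∃ y ∈ stdSimplex ℝ ι, s • y ≤ A *ᵥ y}

noncomputable def collatzWielandt (A : Matrix ι ι ℝ) : ℝ :=
  sSup (collatzWielandtSet A)

variable {A B : Matrix ι ι ℝ}

theorem zero_mem_collatzWielandtSet [Nonempty ι] (hA : ∀ i j, 0 ≤ A i j) :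
    0 ∈ collatzWielandtSet A := by
  classical
  obtain ⟨i⟩ := ‹Nonempty ι›
  have hy := single_mem_stdSimplex ℝ i
  exact ⟨le_rfl, _, hy, by simpa using mulVec_nonneg hA hy.1⟩

theorem collatzWielandtSet_subset_Icc (hA : ∀ i j, 0 ≤ A i j) :
    collatzWielandtSet A ⊆ Set.Icc 0 (∑ i, ∑ j, A i j) := by
  rintro s ⟨hs, y, hy, hsy⟩
  refine ⟨hs, ?_⟩
  calc s = ∑ i, s * y i := by rw [← Finset.mul_sum, hy.2, mul_one]
    _ ≤ ∑ i, ∑ j, A i j * y j := Finset.sum_le_sum fun i _ => hsy i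
    _ ≤ ∑ i, ∑ j, A i j := Finset.sum_le_sum fun i _ => Finset.sum_le_sum fun j _ =>
        mul_le_of_le_one_right (hA i j) (mem_Icc_of_mem_stdSimplex hy j).2

theorem bddAbove_collatzWielandtSet (hA : ∀ i j, 0 ≤ A i j) : BddAbove (collatzWielandtSet A) :=
  bddAbove_Icc.mono (collatzWielandtSet_subset_Icc hA)

theorem le_collatzWielandt (hA : ∀ i j, 0 ≤ A i j) {s : ℝ} (hs : s ∈ collatzWielandtSet A) :
    s ≤ collatzWielandt A :=
  le_csSup (bddAbove_collatzWielandtSet hA) hs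

theorem collatzWielandt_nonneg [Nonempty ι] (hA : ∀ i j, 0 ≤ A i j) : 0 ≤ collatzWielandt A :=
  le_collatzWielandt hA (zero_mem_collatzWielandtSet hA)

theorem isCompact_collatzWielandtSet (hA : ∀ i j, 0 ≤ A i j) :
    IsCompact (collatzWielandtSet A) := by
  have hK : IsCompact ((Set.Icc 0 (∑ i, ∑ j, A i j) ×ˢ stdSimplex ℝ ι) ∩
      {p : ℝ × (ι → ℝ) | p.1 • p.2 ≤ A *ᵥ p.2}) :=
    (isCompact_Icc.prod (isCompact_stdSimplex ℝ ι)).inter_right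
      (isClosed_le (by fun_prop) (Continuous.matrix_mulVec continuous_const continuous_snd))
  convert hK.image continuous_fst using 1
  ext s
  constructor
  · rintro ⟨hs, y, hy, hsy⟩
    exact ⟨(s, y), ⟨⟨collatzWielandtSet_subset_Icc hA ⟨hs, y, hy, hsy⟩, hy⟩, hsy⟩, rfl⟩
  · rintro ⟨⟨s, y⟩, ⟨⟨hs, hy⟩, hsy⟩, rfl⟩
    exact ⟨hs.1, y, hy, hsy⟩

theorem collatzWielandt_mem [Nonempty ι] (hA : ∀ i j, 0 ≤ A i j) :
    collatzWielandt A ∈ collatzWielandtSet A :=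
  (isCompact_collatzWielandtSet hA).sSup_mem ⟨0, zero_mem_collatzWielandtSet hA⟩

theorem collatzWielandtSet_mono (hAB : ∀ i j, A i j ≤ B i j) :
    collatzWielandtSet A ⊆ collatzWielandtSet B := by
  rintro s ⟨hs, y, hy, hsy⟩
  exact ⟨hs, y, hy, hsy.trans (mulVec_le_mulVec_of_le hAB hy.1)⟩

theorem collatzWielandt_mono [Nonempty ι] (hA : ∀ i j, 0 ≤ A i j)
    (hAB : ∀ i j, A i j ≤ B i j) : collatzWielandt A ≤ collatzWielandt B :=
  le_collatzWielandt (fun i j => (hA i j).trans (hAB i j))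
    (collatzWielandtSet_mono hAB (collatzWielandt_mem hA))

theorem mem_collatzWielandtSet_of_smul_le {s : ℝ} (hs : 0 ≤ s) {y : ι → ℝ} (hy : 0 ≤ y)
    (hy0 : y ≠ 0) (h : s • y ≤ A *ᵥ y) : s ∈ collatzWielandtSet A := by
  have hsum : 0 < ∑ i, y i := by
    obtain ⟨j, hj⟩ := Function.ne_iff.mp hy0
    exact Finset.sum_pos' (fun i _ => hy i) ⟨j, Finset.mem_univ j, (hy j).lt_of_ne' hj⟩
  set c := (∑ i, y i)⁻¹
  have hc : 0 ≤ c := inv_nonneg.mpr hsum.le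
  refine ⟨hs, c • y, ⟨fun i => mul_nonneg hc (hy i), ?_⟩, ?_⟩
  · simp only [Pi.smul_apply, smul_eq_mul, ← Finset.mul_sum, c, inv_mul_cancel₀ hsum.ne']
  · rw [smul_comm, mulVec_smul]
    exact smul_le_smul_of_nonneg_left h hc

theorem norm_mem_collatzWielandtSet (hA : ∀ i j, 0 ≤ A i j) {μ : ℂ} {w : ι → ℂ} (hw : w ≠ 0)
    (h : A.map Complex.ofReal *ᵥ w = μ • w) : ‖μ‖ ∈ collatzWielandtSet A := by
  refine mem_collatzWielandtSet_of_smul_le (norm_nonneg μ) (fun i => norm_nonneg (w i))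
    (fun h0 => hw (funext fun i => norm_eq_zero.mp (congrFun h0 i))) fun i => ?_
  calc ‖μ‖ * ‖w i‖ = ‖∑ j, (A i j : ℂ) * w j‖ := by
        rw [← norm_mul, ← smul_eq_mul, ← Pi.smul_apply, ← h]; rfl
    _ ≤ ∑ j, ‖(A i j : ℂ) * w j‖ := norm_sum_le _ _
    _ = ∑ j, A i j * ‖w j‖ := by
        simp only [norm_mul, Complex.norm_real, Real.norm_of_nonneg (hA _ _)]

theorem exists_mulVec_eq_collatzWielandt_smul_of_pos [Nonempty ι] (hB : ∀ i j, 0 < B i j) :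
    ∃ y ∈ stdSimplex ℝ ι, B *ᵥ y = collatzWielandt B • y := by
  have hB0 : ∀ i j, 0 ≤ B i j := fun i j => (hB i j).le
  obtain ⟨-, y, hy, h⟩ := collatzWielandt_mem hB0
  set r := collatzWielandt B
  refine ⟨y, hy, ?_⟩
  by_contra hne
  set w := B *ᵥ y
  have hw : ∀ i, 0 < w i := mulVec_pos hB hy.1 (ne_zero_of_mem_stdSimplex hy)
  have hslack : ∀ i, 0 < (B *ᵥ (w - r • y)) i :=
    mulVec_pos hB (sub_nonneg.mpr h) (sub_ne_zero.mpr hne)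
  have hlt : ∀ i, r * w i < (B *ᵥ w) i := fun i => by
    have := hslack i
    rw [mulVec_sub, mulVec_smul] at this
    simpa [sub_pos] using this
  obtain ⟨s, hsr, hsw⟩ := exists_gt_smul_le_of_forall_mul_lt hlt
  have hs : s ∈ collatzWielandtSet B :=
    mem_collatzWielandtSet_of_smul_le ((collatzWielandt_nonneg hB0).trans hsr.le)
      (fun i => (hw i).le) (fun h0 => (hw _).ne' (congrFun h0 (Classical.arbitrary ι))) hsw
  exact hsr.not_ge (le_collatzWielandt hB0 hs)

theorem isClosed_setOf_mulVec_eq_smul :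
    IsClosed {p : Matrix ι ι ℝ × ℝ × (ι → ℝ) | p.1 *ᵥ p.2.2 = p.2.1 • p.2.2} :=
  isClosed_eq (Continuous.matrix_mulVec continuous_fst (by fun_prop)) (by fun_prop)

theorem exists_mulVec_eq_collatzWielandt_smul [Nonempty ι] (hA : ∀ i j, 0 ≤ A i j) :
    ∃ v ∈ stdSimplex ℝ ι, A *ᵥ v = collatzWielandt A • v := by
  set B : ℕ → Matrix ι ι ℝ := fun k => A + (1 / ((k : ℝ) + 1)) • Matrix.of fun _ _ => 1
  have hε : ∀ k : ℕ, 0 < 1 / ((k : ℝ) + 1) := fun k => by positivity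
  have hB : ∀ k i j, B k i j = A i j + 1 / ((k : ℝ) + 1) := fun k i j => by simp [B]
  have hAB : ∀ k i j, A i j ≤ B k i j := fun k i j => by rw [hB]; linarith [hε k]
  have hBpos : ∀ k i j, 0 < B k i j := fun k i j => by rw [hB]; linarith [hA i j, hε k]
  have hBB0 : ∀ k i j, B k i j ≤ B 0 i j := fun k i j => by
    rw [hB, hB]; gcongr; simp
  have hBA : Tendsto B atTop (𝓝 A) := by
    have := (tendsto_const_nhds (x := A)).add <|
      (tendsto_one_div_add_atTop_nhds_zero_nat (𝕜 := ℝ)).smul_const (Matrix.of fun _ _ => (1 : ℝ))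
    rwa [zero_smul, add_zero] at this
  choose y hy hBy using fun k => exists_mulVec_eq_collatzWielandt_smul_of_pos (hBpos k)
  have hr : ∀ k, collatzWielandt (B k) ∈ Set.Icc (collatzWielandt A) (collatzWielandt (B 0)) :=
    fun k => ⟨collatzWielandt_mono hA (hAB k),
      collatzWielandt_mono (fun i j => (hBpos k i j).le) (hBB0 k)⟩
  obtain ⟨⟨ρ, v⟩, ⟨hρ, hv⟩, φ, hφ, hlim⟩ :=
    (isCompact_Icc.prod (isCompact_stdSimplex ℝ ι)).tendsto_subseq
      (x := fun k => (collatzWielandt (B k), y k)) fun k => ⟨hr k, hy k⟩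
  have hAv : A *ᵥ v = ρ • v := isClosed_setOf_mulVec_eq_smul.mem_of_tendsto
    ((hBA.comp hφ.tendsto_atTop).prodMk_nhds hlim) (Eventually.of_forall fun k => hBy (φ k))
  have hρA : ρ ≤ collatzWielandt A := le_collatzWielandt hA <|
    mem_collatzWielandtSet_of_smul_le ((collatzWielandt_nonneg hA).trans hρ.1) hv.1
      (ne_zero_of_mem_stdSimplex hv) hAv.ge
  exact ⟨v, hv, by rw [hAv, le_antisymm hρA hρ.1]⟩

end Matrix

open Matrix

theorem specRad_eq_collatzWielandt {n : ℕ} [NeZero n] {A : Matrix (Fin n) (Fin n) ℝ}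
    (hA : ∀ i j, 0 ≤ A i j) : specRad n A = collatzWielandt A := by
  have hS : {t : ℝ | ∃ μ : ℂ, (A.map Complex.ofReal).charpoly.IsRoot μ ∧ t = ‖μ‖} ⊆
      collatzWielandtSet A := by
    rintro _ ⟨μ, hμ, rfl⟩
    obtain ⟨w, hw, h⟩ := isRoot_charpoly_iff_exists_mulVec_eq_smul.mp hμ
    exact norm_mem_collatzWielandtSet hA hw h
  obtain ⟨v, hv, hAv⟩ := exists_mulVec_eq_collatzWielandt_smul hA
  have hmem : collatzWielandt A ∈
      {t : ℝ | ∃ μ : ℂ, (A.map Complex.ofReal).charpoly.IsRoot μ ∧ t = ‖μ‖} := by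
    refine ⟨collatzWielandt A, isRoot_charpoly_iff_exists_mulVec_eq_smul.mpr
      ⟨Complex.ofReal ∘ v, ?_, ?_⟩, ?_⟩
    · exact fun h0 => ne_zero_of_mem_stdSimplex hv
        (funext fun i => Complex.ofReal_eq_zero.mp (congrFun h0 i))
    · ext i
      simpa [mulVec, dotProduct] using congrArg (fun u => (u i : ℂ)) hAv
    · rw [Complex.norm_real, Real.norm_of_nonneg (collatzWielandt_nonneg hA)]
  exact le_antisymm (csSup_le ⟨_, hmem⟩ fun t ht => le_collatzWielandt hA (hS ht))
    (le_csSup ((bddAbove_collatzWielandtSet hA).mono hS) hmem)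

/-- **Perron–Frobenius theorem (existence part).** Every entrywise nonnegative
real `n × n` matrix (`n ≥ 1`) has a nonzero entrywise nonnegative eigenvector
with eigenvalue the spectral radius. -/
theorem perron_frobenius_exists (n : ℕ) (hn : 1 ≤ n)
    (A : Matrix (Fin n) (Fin n) ℝ) (hA : ∀ i j, 0 ≤ A i j) :
    ∃ v : Fin n → ℝ, v ≠ 0 ∧ (∀ i, 0 ≤ v i) ∧ A.mulVec v = specRad n A • v := by
  have : NeZero n := ⟨by omega⟩
  obtain ⟨v, hv, hAv⟩ := exists_mulVec_eq_collatzWielandt_smul hA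
  exact ⟨v, ne_zero_of_mem_stdSimplex hv, hv.1, by rw [specRad_eq_collatzWielandt hA, hAv]⟩
end

section
/- Perron–Frobenius theorem for quantum channels, existence part (Evans–Høegh-Krohn; Theorem 7.2 of the paper). Let n ≥ 1 and let Φ : Mₙ(ℂ) → Mₙ(ℂ) be a quantum channel, i.e., a trace-preserving completely positive linear map. Then there exists a nonzero positive-semidefinite matrix D ∈ Mₙ(ℂ) such that Φ(D) = r D, where r is the spectral radius of Φ regarded as a linear operator on Mₙ(ℂ). -/
open Matrix
open scoped ComplexOrder

/-- The blockwise extension `Φ ⊗ id_k` of a linear map `Φ : Mₙ(ℂ) → Mₙ(ℂ)` to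
`Mₙ(ℂ) ⊗ M_k(ℂ) ≅ M_{nk}(ℂ)`: its `((i,s),(j,t))` entry is
`∑_{a,b} Φ(E_{ab})_{ij} X_{(a,s),(b,t)}`. -/
noncomputable def blockExt (n k : ℕ)
    (Φ : Matrix (Fin n) (Fin n) ℂ →ₗ[ℂ] Matrix (Fin n) (Fin n) ℂ)
    (X : Matrix (Fin n × Fin k) (Fin n × Fin k) ℂ) :
    Matrix (Fin n × Fin k) (Fin n × Fin k) ℂ := fun p q =>
  ∑ a : Fin n, ∑ b : Fin n,
    Φ (Matrix.single a b 1) p.1 q.1 * X (a, p.2) (b, q.2)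

/-- `Φ` is completely positive: for every `k ≥ 1` the blockwise extension
`Φ ⊗ id_k` maps positive-semidefinite matrices to positive-semidefinite
matrices. -/
def IsCompletelyPositive (n : ℕ)
    (Φ : Matrix (Fin n) (Fin n) ℂ →ₗ[ℂ] Matrix (Fin n) (Fin n) ℂ) : Prop :=
  ∀ k : ℕ, 1 ≤ k → ∀ X : Matrix (Fin n × Fin k) (Fin n × Fin k) ℂ,
    X.PosSemidef → (blockExt n k Φ X).PosSemidef

/-- The spectral radius of a linear operator on `Mₙ(ℂ)`: the supremum of `|μ|`
over all (complex) eigenvalues `μ`. -/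
noncomputable def chanSpecRad (n : ℕ)
    (Φ : Matrix (Fin n) (Fin n) ℂ →ₗ[ℂ] Matrix (Fin n) (Fin n) ℂ) : ℝ :=
  sSup {t : ℝ | ∃ μ : ℂ, (∃ x : Matrix (Fin n) (Fin n) ℂ, x ≠ 0 ∧ Φ x = μ • x) ∧
    t = ‖μ‖}

/-!
Since positive semidefinite matrices span `Mₙ(ℂ)` and the entries of a positive semidefinite
matrix are bounded by its trace, the orbit `Φᵏ x` of every `x` under a positive trace-preserving
`Φ` is bounded; hence every eigenvalue of `Φ` has modulus at most `1`. On the other hand the range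
of `Φ - id` consists of trace-zero matrices, so `1` is an eigenvalue, and since `Φ` commutes with
the adjoint there is a Hermitian fixed point `X = X⁺ - X⁻`. With `Q` the projection onto the
positive spectral subspace of `X`, trace preservation gives
`tr((1 - Q) Φ(X⁺)) + tr(Q Φ(X⁻)) = 0`; both terms are traces of products of positive matrices,
so both products vanish and `Φ(X⁺) = Q Φ(X) = Q X = X⁺`. The same applies to `X⁻ = (-X)⁺`.
-/

open scoped MatrixOrder

namespace Matrix

variable {m : Type*} [Fintype m]

theorem PosSemidef.norm_apply_le_trace {A : Matrix m m ℂ} (hA : A.PosSemidef) (i j : m) :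
    ‖A i j‖ ≤ ‖A.trace‖ := by
  have hdiag (k : m) : ‖A k k‖ ≤ ‖A.trace‖ := by
    have hle : A k k ≤ A.trace :=
      Finset.single_le_sum (f := A.diag) (fun l _ => hA.diag_nonneg) (Finset.mem_univ k)
    rw [← Complex.re_eq_norm.2 hA.diag_nonneg, ← Complex.re_eq_norm.2 hA.trace_nonneg]
    exact (Complex.le_def.1 hle).1
  have hdet := (hA.submatrix ![i, j]).det_nonneg
  rw [det_fin_two, sub_nonneg] at hdet
  simp only [submatrix_apply, Matrix.cons_val_zero, Matrix.cons_val_one] at hdet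
  rw [← hA.1.apply j i, Complex.star_def, Complex.mul_conj, Complex.normSq_eq_norm_sq] at hdet
  have hsq : ‖A i j‖ ^ 2 ≤ ‖A.trace‖ ^ 2 := calc
    ‖A i j‖ ^ 2 ≤ ‖A i i * A j j‖ := by
      rw [← Complex.re_eq_norm.2 (mul_nonneg hA.diag_nonneg hA.diag_nonneg)]
      exact_mod_cast (Complex.le_def.1 hdet).1
    _ ≤ ‖A.trace‖ ^ 2 := by
      rw [norm_mul, sq]
      exact mul_le_mul (hdiag i) (hdiag j) (norm_nonneg _) (norm_nonneg _)
  exact (pow_le_pow_iff_left₀ (norm_nonneg _) (norm_nonneg _) two_ne_zero).1 hsq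

variable [DecidableEq m]

theorem trace_mul_eq_trace_conjTranspose_mul_self {A B : Matrix m m ℂ} (hA : 0 ≤ A)
    (hB : 0 ≤ B) :
    (A * B).trace = ((CFC.sqrt B * CFC.sqrt A)ᴴ * (CFC.sqrt B * CFC.sqrt A)).trace := by
  rw [conjTranspose_mul, (CFC.sqrt_nonneg A).posSemidef.1.eq, (CFC.sqrt_nonneg B).posSemidef.1.eq,
    ← mul_assoc, trace_mul_cycle, ← mul_assoc, mul_assoc, CFC.sqrt_mul_sqrt_self A hA,
    CFC.sqrt_mul_sqrt_self B hB, trace_mul_comm]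

theorem trace_mul_nonneg {A B : Matrix m m ℂ} (hA : 0 ≤ A) (hB : 0 ≤ B) :
    0 ≤ (A * B).trace := by
  rw [trace_mul_eq_trace_conjTranspose_mul_self hA hB]
  exact (posSemidef_conjTranspose_mul_self _).trace_nonneg

theorem mul_eq_zero_of_trace_mul_eq_zero {A B : Matrix m m ℂ} (hA : 0 ≤ A) (hB : 0 ≤ B)
    (h : (A * B).trace = 0) : A * B = 0 := by
  rw [trace_mul_eq_trace_conjTranspose_mul_self hA hB,
    trace_conjTranspose_mul_self_eq_zero_iff] at h
  calc A * B = CFC.sqrt A * (CFC.sqrt B * CFC.sqrt A)ᴴ * CFC.sqrt B := by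
        rw [conjTranspose_mul, (CFC.sqrt_nonneg A).posSemidef.1.eq,
          (CFC.sqrt_nonneg B).posSemidef.1.eq, ← mul_assoc, mul_assoc _ _ (CFC.sqrt B),
          CFC.sqrt_mul_sqrt_self A hA, CFC.sqrt_mul_sqrt_self B hB]
    _ = 0 := by rw [h, conjTranspose_zero, mul_zero, zero_mul]

end Matrix

theorem IsCompletelyPositive.map_nonneg {n : ℕ}
    {Φ : Matrix (Fin n) (Fin n) ℂ →ₗ[ℂ] Matrix (Fin n) (Fin n) ℂ} (hCP : IsCompletelyPositive n Φ)
    {x : Matrix (Fin n) (Fin n) ℂ} (hx : 0 ≤ x) : 0 ≤ Φ x := by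
  have hblock := hCP 1 le_rfl _ ((nonneg_iff_posSemidef.1 hx).submatrix Prod.fst)
  have hΦx : Φ x = (blockExt n 1 Φ (x.submatrix Prod.fst Prod.fst)).submatrix
      (fun i => (i, 0)) (fun i => (i, 0)) := by
    ext i j
    conv_lhs => rw [matrix_eq_sum_single x]
    simp only [map_sum, Matrix.sum_apply]
    refine Finset.sum_congr rfl fun a _ => Finset.sum_congr rfl fun b _ => ?_
    rw [← mul_one (x a b), ← smul_eq_mul, ← smul_single, map_smul]
    simp [mul_comm]
  rw [hΦx, nonneg_iff_posSemidef]
  exact hblock.submatrix _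

theorem map_star_of_map_nonneg {m l : Type*} [Fintype m] [DecidableEq m] [Fintype l]
    {Φ : Matrix m m ℂ →ₗ[ℂ] Matrix l l ℂ} (hΦ : ∀ a, 0 ≤ a → 0 ≤ Φ a) (x : Matrix m m ℂ) :
    Φ (star x) = star (Φ x) := by
  have hx : x ∈ Submodule.span ℂ {a : Matrix m m ℂ | 0 ≤ a} := by
    rw [CStarAlgebra.span_nonneg]; trivial
  induction hx using Submodule.span_induction with
  | mem a ha =>
    rw [(IsSelfAdjoint.of_nonneg ha).star_eq, (IsSelfAdjoint.of_nonneg (hΦ a ha)).star_eq]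
  | zero => simp
  | add a b _ _ ha hb => rw [star_add, map_add, map_add, ha, hb, star_add]
  | smul c a _ ha => rw [star_smul, map_smul, map_smul, ha, star_smul]

section PositiveMap

variable {m : Type*} {Φ : Matrix m m ℂ →ₗ[ℂ] Matrix m m ℂ}

theorem pow_apply_nonneg (hΦ : ∀ a, 0 ≤ a → 0 ≤ Φ a) (k : ℕ) {a : Matrix m m ℂ} (ha : 0 ≤ a) :
    0 ≤ (Φ ^ k) a := by
  induction k with
  | zero => exact ha
  | succ k ih => rw [pow_succ', Module.End.mul_apply]; exact hΦ _ ih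

variable [Fintype m]

theorem trace_pow_apply (hTP : ∀ x, (Φ x).trace = x.trace) (k : ℕ) (a : Matrix m m ℂ) :
    ((Φ ^ k) a).trace = a.trace := by
  induction k with
  | zero => rfl
  | succ k ih => rw [pow_succ', Module.End.mul_apply, hTP, ih]

open ComplexStarModule in
theorem exists_isSelfAdjoint_map_eq_self (hstar : ∀ x, Φ (star x) = star (Φ x))
    {x : Matrix m m ℂ} (hx0 : x ≠ 0) (hx : Φ x = x) :
    ∃ X : Matrix m m ℂ, X ≠ 0 ∧ IsSelfAdjoint X ∧ Φ X = X := by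
  have hre : Φ (ℜ x) = ℜ x := by
    rw [realPart_apply_coe, LinearMap.map_smul_of_tower, map_add, hstar, hx]
  have him : Φ (ℑ x) = ℑ x := by
    rw [imaginaryPart_apply_coe, map_smul, LinearMap.map_smul_of_tower, map_sub, hstar, hx]
  by_cases hre0 : (ℜ x : Matrix m m ℂ) = 0
  · refine ⟨ℑ x, fun him0 => hx0 ?_, (ℑ x).2, him⟩
    rw [← realPart_add_I_smul_imaginaryPart x, hre0, him0, smul_zero, add_zero]
  · exact ⟨ℜ x, hre0, (ℜ x).2, hre⟩

variable [DecidableEq m]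

theorem exists_ne_zero_map_eq_self [Nonempty m] (hTP : ∀ x, (Φ x).trace = x.trace) :
    ∃ x : Matrix m m ℂ, x ≠ 0 ∧ Φ x = x := by
  by_contra! h
  have hinj : Function.Injective (Φ - LinearMap.id : Module.End ℂ (Matrix m m ℂ)) := by
    rw [← LinearMap.ker_eq_bot, Submodule.eq_bot_iff]
    intro x hx
    by_contra hx0
    exact h x hx0 (sub_eq_zero.1 hx)
  -- `Φ - id` would be surjective, but its values have trace zero
  obtain ⟨y, hy⟩ := LinearMap.injective_iff_surjective.1 hinj 1
  have htr := congrArg trace hy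
  simp only [LinearMap.sub_apply, LinearMap.id_coe, id_eq, trace_sub, hTP, sub_self, trace_one] at htr
  exact Fintype.card_ne_zero (by exact_mod_cast htr.symm)

theorem map_posPart_eq_self (hΦ : ∀ a, 0 ≤ a → 0 ≤ Φ a) (hTP : ∀ x, (Φ x).trace = x.trace)
    {X : Matrix m m ℂ} (hX : IsSelfAdjoint X) (hfix : Φ X = X) : Φ X⁺ = X⁺ := by
  have hcont (f : ℝ → ℝ) : ContinuousOn f (spectrum ℝ X) := X.finite_real_spectrum.continuousOn f
  set Q := cfc (fun t : ℝ => if 0 < t then (1 : ℝ) else 0) X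
  have hQ0 : 0 ≤ Q := cfc_nonneg fun t _ => by split_ifs <;> norm_num
  have hQ1 : 0 ≤ 1 - Q := sub_nonneg.2 <| cfc_le_one _ _ fun t _ => by split_ifs <;> norm_num
  have hQX : Q * X = X⁺ := calc
    Q * X = cfc (fun t : ℝ => (if 0 < t then (1 : ℝ) else 0) * t) X := by
      rw [cfc_mul _ _ X (hcont _) (hcont _), cfc_id' ℝ X]
    _ = cfc (fun t : ℝ => t⁺) X := cfc_congr fun t _ => by
      split_ifs with h
      · simp [h.le]
      · simp [not_lt.1 h]
    _ = X⁺ := by rw [CFC.posPart_def, cfcₙ_eq_cfc]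
  have hdiff : Φ X⁺ - Φ X⁻ = X := by rw [← map_sub, CFC.posPart_sub_negPart X hX, hfix]
  have hP := hΦ _ (CFC.posPart_nonneg X)
  have hN := hΦ _ (CFC.negPart_nonneg X)
  have hsum : ((1 - Q) * Φ X⁺).trace + (Q * Φ X⁻).trace = 0 := by
    have : (1 - Q) * Φ X⁺ + Q * Φ X⁻ = Φ X⁺ - Q * (Φ X⁺ - Φ X⁻) := by noncomm_ring
    rw [← trace_add, this, hdiff, trace_sub, hTP, hQX, sub_self]
  obtain ⟨hPtr, hNtr⟩ :=
    (add_eq_zero_iff_of_nonneg (trace_mul_nonneg hQ1 hP) (trace_mul_nonneg hQ0 hN)).1 hsum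
  have hQP : Q * Φ X⁺ = Φ X⁺ := by
    have h := mul_eq_zero_of_trace_mul_eq_zero hQ1 hP hPtr
    rwa [sub_mul, one_mul, sub_eq_zero, eq_comm] at h
  calc Φ X⁺ = Q * (Φ X⁺ - Φ X⁻) := by
        rw [mul_sub, hQP, mul_eq_zero_of_trace_mul_eq_zero hQ0 hN hNtr, sub_zero]
    _ = X⁺ := by rw [hdiff, hQX]

theorem exists_nonneg_map_eq_self [Nonempty m] (hΦ : ∀ a, 0 ≤ a → 0 ≤ Φ a)
    (hTP : ∀ x, (Φ x).trace = x.trace) : ∃ D : Matrix m m ℂ, D ≠ 0 ∧ 0 ≤ D ∧ Φ D = D := by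
  obtain ⟨x, hx0, hx⟩ := exists_ne_zero_map_eq_self hTP
  obtain ⟨X, hX0, hX, hfix⟩ :=
    exists_isSelfAdjoint_map_eq_self (map_star_of_map_nonneg hΦ) hx0 hx
  by_cases hP : X⁺ = 0
  · refine ⟨X⁻, fun hN => hX0 ?_, CFC.negPart_nonneg X, ?_⟩
    · rw [← CFC.posPart_sub_negPart X hX, hP, hN, sub_zero]
    · rw [← CFC.posPart_neg]
      exact map_posPart_eq_self hΦ hTP hX.neg (by rw [map_neg, hfix])
  · exact ⟨X⁺, hP, CFC.posPart_nonneg X, map_posPart_eq_self hΦ hTP hX hfix⟩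

theorem exists_norm_pow_apply_le (hΦ : ∀ a, 0 ≤ a → 0 ≤ Φ a)
    (hTP : ∀ x, (Φ x).trace = x.trace) (x : Matrix m m ℂ) :
    ∃ C, ∀ k i j, ‖(Φ ^ k) x i j‖ ≤ C := by
  have hx : x ∈ Submodule.span ℂ {a : Matrix m m ℂ | 0 ≤ a} := by
    rw [CStarAlgebra.span_nonneg]; trivial
  induction hx using Submodule.span_induction with
  | mem a ha =>
    refine ⟨‖a.trace‖, fun k i j => ?_⟩
    rw [← trace_pow_apply hTP k a]
    exact (nonneg_iff_posSemidef.1 (pow_apply_nonneg hΦ k ha)).norm_apply_le_trace i j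
  | zero => exact ⟨0, by simp⟩
  | add a b _ _ ha hb =>
    obtain ⟨C, hC⟩ := ha
    obtain ⟨D, hD⟩ := hb
    refine ⟨C + D, fun k i j => ?_⟩
    rw [map_add, Matrix.add_apply]
    exact (norm_add_le _ _).trans (add_le_add (hC k i j) (hD k i j))
  | smul c a _ ha =>
    obtain ⟨C, hC⟩ := ha
    refine ⟨‖c‖ * C, fun k i j => ?_⟩
    rw [map_smul, Matrix.smul_apply, norm_smul]
    exact mul_le_mul_of_nonneg_left (hC k i j) (norm_nonneg c)

theorem norm_le_one_of_map_eq_smul (hΦ : ∀ a, 0 ≤ a → 0 ≤ Φ a)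
    (hTP : ∀ x, (Φ x).trace = x.trace) {μ : ℂ} {x : Matrix m m ℂ} (hx0 : x ≠ 0)
    (hx : Φ x = μ • x) : ‖μ‖ ≤ 1 := by
  obtain ⟨C, hC⟩ := exists_norm_pow_apply_le hΦ hTP x
  obtain ⟨i, j, hij⟩ : ∃ i j, x i j ≠ 0 := by
    by_contra! h
    exact hx0 (Matrix.ext h)
  have hpow (k : ℕ) : (Φ ^ k) x = μ ^ k • x := by
    induction k with
    | zero => simp
    | succ k ih => rw [pow_succ', Module.End.mul_apply, ih, map_smul, hx, smul_smul, ← pow_succ]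
  by_contra! hμ
  obtain ⟨k, hk⟩ := pow_unbounded_of_one_lt (C / ‖x i j‖) hμ
  have hCk := hC k i j
  rw [hpow, Matrix.smul_apply, norm_smul, norm_pow] at hCk
  rw [div_lt_iff₀ (norm_pos_iff.2 hij)] at hk
  linarith

end PositiveMap

/-- **Perron–Frobenius theorem for quantum channels (existence part,
Evans–Høegh-Krohn).** A trace-preserving completely positive map
`Φ : Mₙ(ℂ) → Mₙ(ℂ)` (`n ≥ 1`) admits a nonzero positive-semidefinite matrix `D`
with `Φ(D) = r D`, `r` the spectral radius of `Φ`. -/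
theorem quantum_perron_frobenius_exists (n : ℕ) (hn : 1 ≤ n)
    (Φ : Matrix (Fin n) (Fin n) ℂ →ₗ[ℂ] Matrix (Fin n) (Fin n) ℂ)
    (hTP : ∀ x : Matrix (Fin n) (Fin n) ℂ, (Φ x).trace = x.trace)
    (hCP : IsCompletelyPositive n Φ) :
    ∃ D : Matrix (Fin n) (Fin n) ℂ, D ≠ 0 ∧ D.PosSemidef ∧
      Φ D = (chanSpecRad n Φ : ℂ) • D := by
  have : Nonempty (Fin n) := ⟨⟨0, hn⟩⟩
  have hΦ : ∀ a, 0 ≤ a → 0 ≤ Φ a := fun _ => hCP.map_nonneg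
  obtain ⟨D, hD0, hD, hfix⟩ := exists_nonneg_map_eq_self hΦ hTP
  have hr : chanSpecRad n Φ = 1 := by
    refine IsGreatest.csSup_eq ⟨⟨1, ⟨D, hD0, by rw [hfix, one_smul]⟩, by simp⟩, ?_⟩
    rintro t ⟨μ, ⟨x, hx0, hx⟩, rfl⟩
    exact norm_le_one_of_map_eq_smul hΦ hTP hx0 hx
  exact ⟨D, hD0, nonneg_iff_posSemidef.1 hD, by rw [hr, hfix, Complex.ofReal_one, one_smul]⟩
end

section
/- Negativity of the testing function in the localized criterion for the family R_{4,k} (proved in Section 5.2 of the paper). Let k ≥ 5 be a real number and define f(x) = x³ − k³x² + (k⁴ − 1)x + k³. Then f(x) < 0 for every x in the interval [√(k² + k + 1), k + 1]; moreover f'(x) < 0 on this interval and f(√(k² + k + 1)) < 0. -/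
/-- **Negativity of the testing function in the localized criterion for the
family `R_{4,k}`.** For real `k ≥ 5` and `f(x) = x³ − k³x² + (k⁴ − 1)x + k³`,
one has `f(x) < 0` on `[√(k²+k+1), k+1]`; moreover `f' < 0` on this interval
and `f(√(k²+k+1)) < 0`. -/
theorem testing_function_negative (k : ℝ) (hk : 5 ≤ k) :
    (∀ x ∈ Set.Icc (Real.sqrt (k ^ 2 + k + 1)) (k + 1),
      x ^ 3 - k ^ 3 * x ^ 2 + (k ^ 4 - 1) * x + k ^ 3 < 0) ∧
    (∀ x ∈ Set.Icc (Real.sqrt (k ^ 2 + k + 1)) (k + 1),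
      deriv (fun x : ℝ => x ^ 3 - k ^ 3 * x ^ 2 + (k ^ 4 - 1) * x + k ^ 3) x < 0) ∧
    Real.sqrt (k ^ 2 + k + 1) ^ 3 - k ^ 3 * Real.sqrt (k ^ 2 + k + 1) ^ 2 +
      (k ^ 4 - 1) * Real.sqrt (k ^ 2 + k + 1) + k ^ 3 < 0 := by
  set s := Real.sqrt (k ^ 2 + k + 1) with hs
  have harg : (0:ℝ) ≤ k ^ 2 + k + 1 := by positivity
  have hs2 : s ^ 2 = k ^ 2 + k + 1 := Real.sq_sqrt harg
  have hs0 : 0 ≤ s := Real.sqrt_nonneg _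
  have hsk : k < s := by nlinarith [hs2, hs0]
  have hsk1 : s ≤ k + 1 := by nlinarith [hs2, hs0]
  have kpos0 : (0:ℝ) < k := by linarith
  have h5 : (0:ℝ) ≤ k - 5 := by linarith
  have hsq : (s * (k ^ 3 + k + 1)) ^ 2 < (k ^ 3 * (k + 1)) ^ 2 := by
    have : (s * (k ^ 3 + k + 1)) ^ 2 = (k ^ 2 + k + 1) * (k ^ 3 + k + 1) ^ 2 := by
      rw [mul_pow, hs2]
    rw [this]
    nlinarith [mul_nonneg h5 (pow_nonneg kpos0.le 6),
      mul_nonneg h5 (pow_nonneg kpos0.le 5), mul_nonneg h5 (pow_nonneg kpos0.le 4),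
      mul_nonneg h5 (pow_nonneg kpos0.le 3), mul_nonneg h5 (pow_nonneg kpos0.le 2),
      mul_nonneg h5 kpos0.le, h5, hk]
  have hlin : s * (k ^ 3 + k + 1) < k ^ 3 * (k + 1) :=
    lt_of_pow_lt_pow_left₀ 2 (by positivity) hsq
  have hs3 : s ^ 3 = (k ^ 2 + k + 1) * s := by rw [pow_succ, hs2]
  have fsneg : s ^ 3 - k ^ 3 * s ^ 2 + (k ^ 4 - 1) * s + k ^ 3 < 0 := by
    have hs2' : k ^ 3 * s ^ 2 = k ^ 3 * (k ^ 2 + k + 1) := by rw [hs2]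
    nlinarith [hs3, hs2', mul_pos kpos0 (sub_pos.2 hlin)]
  refine ⟨?_, ?_, fsneg⟩
  · intro x hx
    obtain ⟨hx1, hx2⟩ := hx
    have hkx : k < x := hsk.trans_le hx1
    have kpos : (0:ℝ) < k := by linarith
    have hQ : x ^ 2 + x * s + s ^ 2 - k ^ 3 * (x + s) + k ^ 4 - 1 < 0 := by
      nlinarith [mul_pos (pow_pos kpos 3) (sub_pos.2 hkx),
        mul_pos (pow_pos kpos 3) (sub_pos.2 hsk),
        mul_nonneg (sub_nonneg.2 hx2) (by linarith : (0:ℝ) ≤ k + 1 + x),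
        mul_nonneg (sub_nonneg.2 hsk1) (by linarith : (0:ℝ) ≤ k + 1 + s),
        mul_nonneg (sub_nonneg.2 hx2) (sub_nonneg.2 hsk1), hk, sq_nonneg k]
    have hkey : x ^ 3 - k ^ 3 * x ^ 2 + (k ^ 4 - 1) * x + k ^ 3
        - (s ^ 3 - k ^ 3 * s ^ 2 + (k ^ 4 - 1) * s + k ^ 3)
        = (x - s) * (x ^ 2 + x * s + s ^ 2 - k ^ 3 * (x + s) + k ^ 4 - 1) := by
      ring
    nlinarith [fsneg, mul_nonpos_of_nonneg_of_nonpos (sub_nonneg.2 hx1) hQ.le, hkey]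
  · intro x hx
    obtain ⟨hx1, hx2⟩ := hx
    have hd : HasDerivAt (fun x : ℝ => x ^ 3 - k ^ 3 * x ^ 2 + (k ^ 4 - 1) * x + k ^ 3)
        (3 * x ^ 2 - k ^ 3 * (2 * x) + (k ^ 4 - 1)) x := by
      have h1 : HasDerivAt (fun x : ℝ => x ^ 3) (3 * x ^ 2) x := by
        simpa using hasDerivAt_pow 3 x
      have h2 : HasDerivAt (fun x : ℝ => k ^ 3 * x ^ 2) (k ^ 3 * (2 * x)) x := by
        simpa using (hasDerivAt_pow 2 x).const_mul (k ^ 3)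
      have h3 : HasDerivAt (fun x : ℝ => (k ^ 4 - 1) * x) (k ^ 4 - 1) x := by
        simpa using (hasDerivAt_id x).const_mul (k ^ 4 - 1)
      exact ((h1.sub h2).add h3).add_const _
    rw [hd.deriv]
    have hkx : k < x := hsk.trans_le hx1
    have kpos : (0:ℝ) < k := by linarith
    nlinarith [mul_pos (pow_pos kpos 3) (sub_pos.2 hkx),
      mul_nonneg (sub_nonneg.2 hx2) (by linarith : (0:ℝ) ≤ k + 1 + x), hk,
      pow_le_pow_left₀ (by norm_num : (0:ℝ) ≤ 5) hk 2,
      pow_le_pow_left₀ (by norm_num : (0:ℝ) ≤ 5) hk 4, sq_nonneg k]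
end
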